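/- arXiv:0706.0249 — 9 statements merged into one kernel-verified Lean document; each statement's English description precedes it below -/
import Mathlib

section
/- For the three first-order differential operations grad, curl, div on ℝ³ (equivalently, for the composability digraph on {1,2,3} with an edge i→j iff j=i+1 or i+j=4), the number f(k) of meaningful k-th order compositions equals the (k+3)-rd Fibonacci number: f(k) = F_{k+3} for all k ≥ 1 (with F_1 = F_2 = 1). -/
/-!
Count composable sequences by their first operation. With indices `0, 1, 2` for grad, curl, div,
grad and curl can both be followed exactly by curl or div, and div only by grad. Hence the
number `a_k` of chains of length `k + 1` starting at grad equals the one starting at curl, and the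
number `b_k` starting at div satisfies `b_{k+1} = a_k`, while `a_{k+1} = a_k + b_k`. With
`a_0 = b_0 = 1` this gives `a_k = F_{k+2}`, `b_k = F_{k+1}`, and
`f(k + 1) = 2 a_k + b_k = F_{k+4}`.
-/

/-- Adjacency matrix of the composability digraph of the `n` first-order
differential operations `∇_1, …, ∇_n` on `ℝⁿ` (index `i : Fin n` represents
the operation `∇_{i+1}`): there is an edge `i → j` iff `j = i + 1` or
`i + j = n + 1` (in the 1-based indexing of the paper). -/
def adjA (n : ℕ) : Matrix (Fin n) (Fin n) ℤ :=
  Matrix.of fun i j =>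
    if (j : ℕ) = (i : ℕ) + 1 ∨ (i : ℕ) + (j : ℕ) + 2 = n + 1 then 1 else 0

/-- `fCount n k` is the number of meaningful `k`-th order compositions of the
differential operations on `ℝⁿ`, i.e. the number of sequences
`(i_1, …, i_k) ∈ {1, …, n}^k` each consecutive pair of which is composable. -/
def fCount (n k : ℕ) : ℕ :=
  (Finset.univ.filter fun s : Fin k → Fin n =>
    ∀ i j : Fin k, (j : ℕ) = (i : ℕ) + 1 → adjA n (s i) (s j) = 1).card

open Finset

theorem List.isChain_ofFn_cons {α : Type*} {r : α → α → Prop} {k : ℕ} (a : α)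
    (t : Fin (k + 1) → α) :
    (List.ofFn (Fin.cons a t : Fin (k + 2) → α)).IsChain r ↔
      r a (t 0) ∧ (List.ofFn t).IsChain r := by
  rw [List.ofFn_cons, List.ofFn_succ, List.isChain_cons_cons]

theorem List.isChain_ofFn_iff_forall_succ {α : Type*} {r : α → α → Prop} {k : ℕ}
    (s : Fin k → α) :
    (List.ofFn s).IsChain r ↔ ∀ i j : Fin k, (j : ℕ) = i + 1 → r (s i) (s j) := by
  rw [List.isChain_ofFn]
  constructor
  · rintro h ⟨i, hi⟩ ⟨j, hj⟩ (rfl : j = i + 1)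
    exact h i hj
  · intro h i hi
    exact h _ _ rfl

section Chains

variable {α : Type*} [Fintype α] [DecidableEq α] (r : α → α → Prop) [DecidableRel r]

def chainCount (k : ℕ) (a : α) : ℕ :=
  #{s : Fin (k + 1) → α | (List.ofFn s).IsChain r ∧ s 0 = a}

theorem chainCount_zero (a : α) : chainCount r 0 a = 1 := by
  rw [chainCount, card_eq_one]
  exact ⟨fun _ => a, by ext s; simp [funext_iff, Fin.forall_fin_one]⟩

theorem chainCount_succ (k : ℕ) (a : α) :
    chainCount r (k + 1) a = ∑ b with r a b, chainCount r k b := by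
  have hcons : ({s : Fin (k + 2) → α | (List.ofFn s).IsChain r ∧ s 0 = a} : Finset _) =
      map ⟨Fin.cons a, Fin.cons_right_injective (α := fun _ => α) a⟩
        {t : Fin (k + 1) → α | r a (t 0) ∧ (List.ofFn t).IsChain r} := by
    ext s
    simp only [mem_filter, mem_univ, true_and, mem_map, Function.Embedding.coeFn_mk]
    constructor
    · rintro ⟨hs, rfl⟩
      rw [← Fin.cons_self_tail s, List.isChain_ofFn_cons] at hs
      exact ⟨Fin.tail s, hs, Fin.cons_self_tail s⟩
    · rintro ⟨t, ht, rfl⟩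
      exact ⟨(List.isChain_ofFn_cons a t).2 ht, rfl⟩
  rw [chainCount, hcons, card_map, card_eq_sum_card_fiberwise (f := fun t => t 0)
    (t := univ.filter (r a)) (fun t ht => by simp_all)]
  refine sum_congr rfl fun b hb => ?_
  rw [chainCount, filter_filter]
  refine congr_arg card (filter_congr fun t _ => ?_)
  grind

theorem card_isChain_ofFn_succ (k : ℕ) :
    #{s : Fin (k + 1) → α | (List.ofFn s).IsChain r} = ∑ a, chainCount r k a := by
  rw [card_eq_sum_card_fiberwise (f := fun s => s 0) (t := univ) (fun _ _ => mem_univ _)]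
  simp only [chainCount, filter_filter]

end Chains

def Composable (n : ℕ) (i j : Fin n) : Prop := adjA n i j = 1

instance (n : ℕ) : DecidableRel (Composable n) := fun i j =>
  inferInstanceAs (Decidable (adjA n i j = 1))

theorem fCount_eq_card_isChain (n k : ℕ) :
    fCount n k = #{s : Fin k → Fin n | (List.ofFn s).IsChain (Composable n)} := by
  rw [fCount]
  congr 1
  exact filter_congr fun s _ => (List.isChain_ofFn_iff_forall_succ (r := Composable n) s).symm

theorem filter_composable_three :
    ({j | Composable 3 0 j} : Finset _) = {1, 2} ∧ ({j | Composable 3 1 j} : Finset _) = {1, 2} ∧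
      ({j | Composable 3 2 j} : Finset _) = {0} := by
  decide

theorem chainCount_composable_three (k : ℕ) :
    chainCount (Composable 3) k 0 = Nat.fib (k + 2) ∧
      chainCount (Composable 3) k 1 = Nat.fib (k + 2) ∧
      chainCount (Composable 3) k 2 = Nat.fib (k + 1) := by
  induction k with
  | zero => simp [chainCount_zero]
  | succ k ih =>
    obtain ⟨h0, h1, h2⟩ := ih
    obtain ⟨e0, e1, e2⟩ := filter_composable_three
    have hfib : Nat.fib (k + 2) + Nat.fib (k + 1) = Nat.fib (k + 3) := by
      rw [Nat.fib_add_two (n := k + 1), add_comm]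
    simp only [chainCount_succ, e0, e1, e2, sum_pair (show (1 : Fin 3) ≠ 2 by decide),
      sum_singleton, h0, h1, h2, hfib, and_self]

/-- The number of meaningful `k`-th order compositions of grad, curl, div on
`ℝ³` equals the `(k+3)`-rd Fibonacci number (with `F_1 = F_2 = 1`). -/
theorem fCount_three_eq_fib (k : ℕ) (hk : 1 ≤ k) :
    fCount 3 k = Nat.fib (k + 3) := by
  obtain ⟨k, rfl⟩ := Nat.exists_eq_add_of_le' hk
  obtain ⟨h0, h1, h2⟩ := chainCount_composable_three k
  rw [fCount_eq_card_isChain, card_isChain_ofFn_succ, Fin.sum_univ_three, h0, h1, h2,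
    Nat.fib_add_two (n := k + 2), Nat.fib_add_two (n := k + 1)]
  ring
end

section
/- For the Gateaux directional derivative together with the three first-order differential operations on ℝ³ (equivalently, for the composability digraph on {0,1,2,3} with an edge i→j iff (i=0 and j=0) or (i=3 and j=0) or j=i+1 or i+j=4), the number g(k) of meaningful k-th order compositions equals 2^{k+1} for all k ≥ 1. -/
/-- Adjacency matrix of the composability digraph of the Gateaux directional
derivative `∇_0` together with the `n` first-order differential operations
`∇_1, …, ∇_n` on `ℝⁿ` (index `i : Fin (n+1)` represents `∇_i`): there is an
edge `i → j` iff `(i = 0 ∧ j = 0)` or `(i = n ∧ j = 0)` or `j = i + 1` or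
`i + j = n + 1`. -/
def adjB (n : ℕ) : Matrix (Fin (n + 1)) (Fin (n + 1)) ℤ :=
  Matrix.of fun i j =>
    if ((i : ℕ) = 0 ∧ (j : ℕ) = 0) ∨ ((i : ℕ) = n ∧ (j : ℕ) = 0) ∨
        (j : ℕ) = (i : ℕ) + 1 ∨ (i : ℕ) + (j : ℕ) = n + 1 then 1 else 0

/-- `gCount n k` is the number of meaningful `k`-th order compositions of the
differential operations together with the Gateaux directional derivative on
`ℝⁿ`, i.e. the number of sequences `(i_1, …, i_k) ∈ {0, 1, …, n}^k` each
consecutive pair of which is composable. -/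
def gCount (n k : ℕ) : ℕ :=
  (Finset.univ.filter fun s : Fin k → Fin (n + 1) =>
    ∀ i j : Fin k, (j : ℕ) = (i : ℕ) + 1 → adjB n (s i) (s j) = 1).card

section Walks

variable {V : Type*} (R : V → V → Prop)

def IsWalk {k : ℕ} (s : Fin k → V) : Prop :=
  ∀ i j : Fin k, (j : ℕ) = (i : ℕ) + 1 → R (s i) (s j)

instance [DecidableRel R] {k : ℕ} : DecidablePred (IsWalk R (k := k)) :=
  fun _ => inferInstanceAs (Decidable (∀ _ _, _))

variable {R}

theorem isWalk_cons_iff {m : ℕ} {u : V} {t : Fin (m + 1) → V} :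
    IsWalk R (Fin.cons u t : Fin (m + 2) → V) ↔ R u (t 0) ∧ IsWalk R t := by
  constructor
  · intro h
    refine ⟨by simpa using h 0 1 rfl, fun i j hij => ?_⟩
    simpa using h i.succ j.succ (by simp [hij])
  · rintro ⟨hu, ht⟩ i j hij
    obtain ⟨j, rfl⟩ := Fin.exists_succ_eq.mpr (Fin.ne_of_val_ne (by omega : (j : ℕ) ≠ 0))
    induction i using Fin.cases with
    | zero =>
      obtain rfl : j = 0 := Fin.ext (by simpa using hij)
      simpa using hu
    | succ i => simpa using ht i j (by simpa using hij)

def walkConsEquiv (m : ℕ) :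
    (Σ t : {t : Fin (m + 1) → V // IsWalk R t}, {u : V // R u (t.1 0)}) ≃
      {s : Fin (m + 2) → V // IsWalk R s} where
  toFun p := ⟨Fin.cons p.2.1 p.1.1, isWalk_cons_iff.2 ⟨p.2.2, p.1.2⟩⟩
  invFun s :=
    have hs := isWalk_cons_iff.1 ((Fin.cons_self_tail s.1).symm ▸ s.2)
    ⟨⟨Fin.tail s.1, hs.2⟩, ⟨s.1 0, hs.1⟩⟩
  left_inv _ := rfl
  right_inv _ := by simp

variable [Fintype V] [DecidableRel R]

theorem card_isWalk_succ_succ {d : ℕ} (hR : ∀ v, Fintype.card {u // R u v} = d) (m : ℕ) :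
    Fintype.card {s : Fin (m + 2) → V // IsWalk R s} =
      Fintype.card {s : Fin (m + 1) → V // IsWalk R s} * d := by
  rw [← Fintype.card_congr (walkConsEquiv m), Fintype.card_sigma]
  simp [hR]

theorem card_isWalk {d : ℕ} (hR : ∀ v, Fintype.card {u // R u v} = d) (k : ℕ) :
    Fintype.card {s : Fin (k + 1) → V // IsWalk R s} = Fintype.card V * d ^ k := by
  induction k with
  | zero =>
    have hwalk (s : Fin 1 → V) : IsWalk R s := fun i j hij => by omega
    simp [hwalk]
  | succ k ih => rw [card_isWalk_succ_succ hR, ih, pow_succ, mul_assoc]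

end Walks

instance (n : ℕ) : DecidableRel (adjB n · · = 1) := fun _ _ => inferInstance

theorem gCount_eq_card_isWalk (n k : ℕ) :
    gCount n k = Fintype.card {s : Fin k → Fin (n + 1) // IsWalk (adjB n · · = 1) s} := by
  rw [gCount, Fintype.card_subtype]
  rfl

theorem card_adjB_three_predecessors_eq_two (v : Fin 4) : Fintype.card {u // adjB 3 u v = 1} = 2 := by
  revert v
  decide

/-- The number of meaningful `k`-th order compositions of the Gateaux
directional derivative together with grad, curl, div on `ℝ³` equals `2^(k+1)`. -/
theorem gCount_three_eq_two_pow (k : ℕ) (hk : 1 ≤ k) :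
    gCount 3 k = 2 ^ (k + 1) := by
  obtain ⟨m, rfl⟩ := Nat.exists_eq_add_of_le' hk
  rw [gCount_eq_card_isWalk, card_isWalk card_adjB_three_predecessors_eq_two, Fintype.card_fin]
  ring
end

section
/- (Lemma 1) Let P_n(λ) = det(A_n − λI) be the characteristic polynomial of the matrix A_n (in the convention det(A_n − λI)). Then for every n ≥ 7 the recurrence P_n(λ) = λ²(P_{n−2}(λ) − P_{n−4}(λ)) holds as an identity of polynomials. -/
/-- `Pp n` is the polynomial `P_n(λ) = det (A_n - λ I)`. -/
noncomputable def Pp (n : ℕ) : Polynomial ℤ :=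
  ((adjA n).map Polynomial.C - Matrix.scalar (Fin n) Polynomial.X).det

/-!
Write `d_n = det (A_n - λI)` and `e_s` for the determinant of the `s × s` matrix obtained from
`A_{s+1} - λI` by deleting its last row and first column. Expanding `A_n - λI` along its last
row, and the complementary minor of its corner entry along its first column, gives
`d_n = (-1)^(n-1) e_{n-1} + λ² d_{n-2}`; expanding `e_s` along its first row gives
`e_s = e_{s-2} + (-1)^(s-1) d_{s-1}`. Eliminating `e` leaves `d_n = λ² (d_{n-2} - d_{n-4})`.
-/

open Matrix

section Laplace

variable {R : Type*} [CommRing R] {n : ℕ} (A : Matrix (Fin (n + 1)) (Fin (n + 1)) R)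

theorem Matrix.det_succ_row_eq_add {i j j' : Fin (n + 1)} (hj : j ≠ j')
    (h : ∀ k, k ≠ j → k ≠ j' → A i k = 0) :
    A.det = (-1) ^ (i + j : ℕ) * A i j * (A.submatrix i.succAbove j.succAbove).det
      + (-1) ^ (i + j' : ℕ) * A i j' * (A.submatrix i.succAbove j'.succAbove).det := by
  rw [det_succ_row A i, Finset.sum_eq_add_of_mem j j' (Finset.mem_univ _) (Finset.mem_univ _) hj]
  rintro k - ⟨hkj, hkj'⟩
  rw [h k hkj hkj', mul_zero, zero_mul]

theorem Matrix.det_succ_column_eq_single {i j : Fin (n + 1)} (h : ∀ k, k ≠ i → A k j = 0) :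
    A.det = (-1) ^ (i + j : ℕ) * A i j * (A.submatrix i.succAbove j.succAbove).det := by
  rw [det_succ_column A j, Finset.sum_eq_single_of_mem i (Finset.mem_univ _)]
  rintro k - hki
  rw [h k hki, mul_zero, zero_mul]

end Laplace

section CrossMatrix

variable {R : Type*} [CommRing R]

/-- `crossMatrix x n 1 (n - 1)` is `A_n - x I` (indices from 0); the minors met in the cofactor
expansions below are again of this form, with shifted `u` and `v`. -/
def crossMatrix (x : R) (n : ℕ) (u v : ℤ) : Matrix (Fin n) (Fin n) R :=
  of fun i j =>
    (if ((j : ℕ) : ℤ) - i = u ∨ ((i : ℕ) : ℤ) + j = v then 1 else 0)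
      - if ((j : ℕ) : ℤ) - i = u - 1 then x else 0

variable {x : R} {n : ℕ} {u v : ℤ}

theorem crossMatrix_submatrix {m : ℕ} {f g : Fin m → Fin n} (a b : ℤ)
    (hf : ∀ i, ((f i : ℕ) : ℤ) = i + a) (hg : ∀ j, ((g j : ℕ) : ℤ) = j + b) :
    (crossMatrix x n u v).submatrix f g = crossMatrix x m (u + a - b) (v - a - b) := by
  ext i j
  simp only [crossMatrix, submatrix_apply, of_apply, hf, hg]
  split_ifs <;> first | rfl | omega

theorem crossMatrix_submatrix_succ_succ :
    (crossMatrix x (n + 1) u v).submatrix Fin.succ Fin.succ = crossMatrix x n u (v - 2) := by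
  rw [crossMatrix_submatrix 1 1 (by simp) (by simp)]; ring_nf

theorem crossMatrix_submatrix_castSucc_castSucc :
    (crossMatrix x (n + 1) u v).submatrix Fin.castSucc Fin.castSucc = crossMatrix x n u v := by
  rw [crossMatrix_submatrix 0 0 (by simp) (by simp)]; ring_nf

theorem crossMatrix_submatrix_castSucc_succ :
    (crossMatrix x (n + 1) u v).submatrix Fin.castSucc Fin.succ =
      crossMatrix x n (u - 1) (v - 1) := by
  rw [crossMatrix_submatrix 0 1 (by simp) (by simp)]; ring_nf

theorem crossMatrix_submatrix_succ_castSucc :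
    (crossMatrix x (n + 1) u v).submatrix Fin.succ Fin.castSucc =
      crossMatrix x n (u + 1) (v - 1) := by
  rw [crossMatrix_submatrix 1 0 (by simp) (by simp)]; ring_nf

section Entries

variable {i j : Fin n}

theorem crossMatrix_apply_eq_zero (h₁ : ((j : ℕ) : ℤ) - i ≠ u) (h₂ : ((i : ℕ) : ℤ) + j ≠ v)
    (h₃ : ((j : ℕ) : ℤ) - i ≠ u - 1) : crossMatrix x n u v i j = 0 := by
  simp [crossMatrix, h₁, h₂, h₃]

theorem crossMatrix_apply_eq_one (h₁ : ((j : ℕ) : ℤ) - i = u ∨ ((i : ℕ) : ℤ) + j = v)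
    (h₂ : ((j : ℕ) : ℤ) - i ≠ u - 1) : crossMatrix x n u v i j = 1 := by
  simp [crossMatrix, h₁, h₂]

theorem crossMatrix_apply_eq_neg (h₁ : ((i : ℕ) : ℤ) + j ≠ v) (h₂ : ((j : ℕ) : ℤ) - i = u - 1) :
    crossMatrix x n u v i j = -x := by
  simp [crossMatrix, h₁, h₂]

end Entries

variable (x n)

theorem det_crossMatrix_succ_one :
    (crossMatrix x (n + 1) 1 (n + 1)).det = -x * (crossMatrix x n 1 (n - 1)).det := by
  rw [det_succ_column_eq_single _ (i := 0) (j := 0)]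
  · rw [crossMatrix_apply_eq_neg (by simp; omega) (by simp), Fin.succAbove_zero,
      crossMatrix_submatrix_succ_succ, show (n : ℤ) + 1 - 2 = n - 1 by ring]
    norm_num
  · intro k hk
    have := Fin.pos_of_ne_zero hk
    apply crossMatrix_apply_eq_zero <;> simp <;> omega

theorem det_crossMatrix_succ_zero :
    (crossMatrix x (n + 1) 0 (n - 1)).det = (crossMatrix x n 0 (n - 1)).det := by
  rw [det_succ_column_eq_single _ (i := Fin.last n) (j := Fin.last n)]
  · rw [crossMatrix_apply_eq_one (by simp) (by simp), Fin.succAbove_last,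
      crossMatrix_submatrix_castSucc_castSucc]
    simp [← two_mul, pow_mul]
  · intro k hk
    have := Fin.val_lt_last hk
    apply crossMatrix_apply_eq_zero <;> simp <;> omega

theorem det_crossMatrix_add_two_one :
    (crossMatrix x (n + 2) 1 (n + 1)).det =
      (-1) ^ (n + 1) * (crossMatrix x (n + 1) 0 n).det
        + x ^ 2 * (crossMatrix x n 1 (n - 1)).det := by
  rw [det_succ_row_eq_add _ (i := Fin.last (n + 1)) (j := 0) (j' := Fin.last (n + 1))
    Fin.last_pos.ne ?_]
  · rw [crossMatrix_apply_eq_one (by simp) (by simp; omega),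
      crossMatrix_apply_eq_neg (by simp; omega) (by simp), Fin.succAbove_last, Fin.succAbove_zero,
      crossMatrix_submatrix_castSucc_succ, crossMatrix_submatrix_castSucc_castSucc]
    norm_num
    rw [det_crossMatrix_succ_one]
    ring
  · intro k hk₀ hk
    have := Fin.val_lt_last hk
    have := Fin.pos_of_ne_zero hk₀
    apply crossMatrix_apply_eq_zero <;> simp <;> omega

theorem det_crossMatrix_add_two_zero :
    (crossMatrix x (n + 2) 0 (n + 1)).det =
      (crossMatrix x n 0 (n - 1)).det + (-1) ^ (n + 1) * (crossMatrix x (n + 1) 1 n).det := by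
  rw [det_succ_row_eq_add _ (i := 0) (j := 0) (j' := Fin.last (n + 1)) Fin.last_pos.ne ?_]
  · rw [crossMatrix_apply_eq_one (by simp) (by simp),
      crossMatrix_apply_eq_one (by simp) (by simp; omega), Fin.succAbove_last, Fin.succAbove_zero,
      crossMatrix_submatrix_succ_succ, crossMatrix_submatrix_succ_castSucc,
      show (n : ℤ) + 1 - 2 = n - 1 by ring, det_crossMatrix_succ_zero]
    norm_num
  · intro k hk₀ hk
    have := Fin.val_lt_last hk
    have := Fin.pos_of_ne_zero hk₀
    apply crossMatrix_apply_eq_zero <;> simp <;> omega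

theorem det_crossMatrix_add_four :
    (crossMatrix x (n + 4) 1 (n + 3)).det =
      x ^ 2 * ((crossMatrix x (n + 2) 1 (n + 1)).det - (crossMatrix x n 1 (n - 1)).det) := by
  have h₄ : (crossMatrix x (n + 4) 1 (n + 3)).det =
      (-1) ^ (n + 3) * (crossMatrix x (n + 3) 0 (n + 2)).det
        + x ^ 2 * (crossMatrix x (n + 2) 1 (n + 1)).det := by
    simpa [add_assoc, show (n : ℤ) + 2 - 1 = n + 1 by ring]
      using det_crossMatrix_add_two_one x (n + 2)
  have h₃ : (crossMatrix x (n + 3) 0 (n + 2)).det =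
      (crossMatrix x (n + 1) 0 n).det
        + (-1) ^ (n + 2) * (crossMatrix x (n + 2) 1 (n + 1)).det := by
    simpa [add_assoc] using det_crossMatrix_add_two_zero x (n + 1)
  have h₂ := det_crossMatrix_add_two_one x n
  have hsign : ((-1 : R) ^ n) ^ 2 = 1 := by
    rw [← pow_mul, mul_comm, pow_mul, neg_one_sq, one_pow]
  linear_combination h₄ + (-1) ^ (n + 3) * h₃ - h₂ - (crossMatrix x (n + 2) 1 (n + 1)).det * hsign

end CrossMatrix

open Polynomial in
theorem Pp_eq_det_crossMatrix (n : ℕ) : Pp n = (crossMatrix X n 1 (n - 1)).det := by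
  unfold Pp
  congr 1
  ext i j : 1
  simp only [crossMatrix, adjA, Matrix.sub_apply, map_apply, of_apply, scalar_apply,
    diagonal_apply, apply_ite C, C_1, C_0, Fin.ext_iff]
  split_ifs <;> first | rfl | omega

/-- Lemma 1: `P_n(λ) = λ² (P_{n-2}(λ) - P_{n-4}(λ))` for `n ≥ 7`. -/
theorem Pp_recurrence (n : ℕ) (hn : 7 ≤ n) :
    Pp n = Polynomial.X ^ 2 * (Pp (n - 2) - Pp (n - 4)) := by
  obtain ⟨k, rfl⟩ : ∃ k, n = k + 4 := ⟨n - 4, by omega⟩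
  rw [show k + 4 - 2 = k + 2 by omega, Nat.add_sub_cancel]
  simpa [Pp_eq_det_crossMatrix, add_sub_assoc] using det_crossMatrix_add_four Polynomial.X k
end

section
/- (Lemma 2, even case) For every even n = 2m with n ≥ 4, the characteristic polynomial of A_n has the explicit representation det(λI − A_n) = Σ_{k=1}^{⌊(n+2)/4⌋+1} (−1)^{k−1} · C(n/2 − k + 2, k−1) · λ^{n−2k+2}, where C(a,b) denotes the binomial coefficient. -/
section Aux
open Polynomial Finset

def bedge (p q : ℕ) : Prop :=
  (p % 2 = 0 ∧ (q + 2 = p ∨ q = p + 1)) ∨ (p % 2 = 1 ∧ (q = p + 2 ∨ q + 1 = p))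

instance (p q : ℕ) : Decidable (bedge p q) := by unfold bedge; infer_instance

noncomputable def Mfun (p q : ℕ) : Polynomial ℤ :=
  (if p = q then X else 0) - (if bedge p q then 1 else 0)

lemma Mfun_diag (p : ℕ) : Mfun p p = X := by
  have h : ¬ bedge p p := by unfold bedge; omega
  simp [Mfun, h]

lemma Mfun_edge {p q : ℕ} (h1 : p ≠ q) (h2 : bedge p q) : Mfun p q = -1 := by
  simp [Mfun, h1, h2]

lemma Mfun_zero {p q : ℕ} (h1 : p ≠ q) (h2 : ¬ bedge p q) : Mfun p q = 0 := by
  simp [Mfun, h1, h2]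

noncomputable def Dmat (k : ℕ) : Matrix (Fin k) (Fin k) (Polynomial ℤ) :=
  Matrix.of fun i j => Mfun i j

noncomputable def F1mat (t : ℕ) : Matrix (Fin t) (Fin t) (Polynomial ℤ) :=
  Matrix.of fun i j => Mfun i (if (j : ℕ) = t - 1 then t else j)

noncomputable def Emat (s : ℕ) : Matrix (Fin s) (Fin s) (Polynomial ℤ) :=
  Matrix.of fun i j => Mfun (if (i : ℕ) = s - 1 then s else i) j


lemma succAbove_coe {n : ℕ} (j : Fin n) :
    (((⟨n - 1, by omega⟩ : Fin (n+1)).succAbove j : Fin (n+1)) : ℕ)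
      = if (j : ℕ) = n - 1 then n else (j : ℕ) := by
  rcases j with ⟨j, hj⟩
  simp only [Fin.succAbove, Fin.lt_def, Fin.coe_castSucc]
  split_ifs <;> simp_all [Fin.val_succ] <;> omega

lemma det_D_odd (n : ℕ) (hn : n % 2 = 0) :
    (Dmat (n+1)).det = X * (Dmat n).det := by
  rw [Matrix.det_succ_column (Dmat (n+1)) (Fin.last n)]
  rw [Fintype.sum_eq_single (Fin.last n) (fun i hi => by
    have hiv : (i : ℕ) ≠ n := fun h => hi (Fin.ext (by simp [h]))
    have hz : Mfun (i : ℕ) n = 0 := by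
      refine Mfun_zero hiv ?_
      have hlt := i.isLt
      unfold bedge; omega
    simp only [Dmat, Matrix.of_apply, Fin.val_last, hz]
    ring)]
  have h1 : Dmat (n+1) (Fin.last n) (Fin.last n) = X := by
    simp [Dmat, Mfun_diag]
  have h2 : (Dmat (n+1)).submatrix (Fin.last n).succAbove (Fin.last n).succAbove
      = Dmat n := by
    ext i j
    simp [Dmat, Fin.succAbove_last, Matrix.submatrix_apply]
  rw [h1, h2]
  have h3 : ((-1 : Polynomial ℤ)) ^ ((Fin.last n : ℕ) + (Fin.last n : ℕ)) = 1 :=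
    Even.neg_one_pow ⟨n, by simp⟩
  rw [h3]; ring

lemma det_D_even (n : ℕ) (hn : n % 2 = 1) :
    (Dmat (n+1)).det = X * (Dmat n).det + (F1mat n).det := by
  have h1n : 1 ≤ n := by omega
  rw [Matrix.det_succ_row (Dmat (n+1)) (Fin.last n)]
  rw [Fintype.sum_eq_add (Fin.last n) (⟨n-1, by omega⟩ : Fin (n+1))
    (by intro h; have := congrArg Fin.val h; simp at this; omega)
    (fun j hj => by
      have hj1 : (j : ℕ) ≠ n := fun h => hj.1 (Fin.ext (by simp [h]))
      have hj2 : (j : ℕ) ≠ n - 1 := fun h => hj.2 (Fin.ext (by simp [h]))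
      have hlt := j.isLt
      have hz : Mfun n (j : ℕ) = 0 := by
        refine Mfun_zero (by omega) ?_
        unfold bedge; omega
      simp only [Dmat, Matrix.of_apply, Fin.val_last, hz]
      ring)]
  have h1 : Dmat (n+1) (Fin.last n) (Fin.last n) = X := by
    simp [Dmat, Mfun_diag]
  have h2 : (Dmat (n+1)).submatrix (Fin.last n).succAbove (Fin.last n).succAbove
      = Dmat n := by
    ext i j
    simp [Dmat, Fin.succAbove_last, Matrix.submatrix_apply]
  have h3 : Dmat (n+1) (Fin.last n) ⟨n-1, by omega⟩ = -1 := by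
    have : bedge n (n-1) := by unfold bedge; omega
    simp only [Dmat, Matrix.of_apply, Fin.val_last]
    exact Mfun_edge (by omega) this
  have h4 : (Dmat (n+1)).submatrix (Fin.last n).succAbove
      (⟨n-1, by omega⟩ : Fin (n+1)).succAbove = F1mat n := by
    ext i j
    simp only [Matrix.submatrix_apply, Dmat, F1mat, Matrix.of_apply,
      Fin.succAbove_last, succAbove_coe, Fin.coe_castSucc]
  have h5 : ((-1 : Polynomial ℤ)) ^ ((Fin.last n : ℕ) + (Fin.last n : ℕ)) = 1 :=
    Even.neg_one_pow ⟨n, by simp⟩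
  have h6 : ((-1 : Polynomial ℤ)) ^ ((Fin.last n : ℕ) + ((⟨n-1, by omega⟩ : Fin (n+1)) : ℕ)) = -1 := by
    refine Odd.neg_one_pow ?_
    show Odd (n + (n - 1))
    exact ⟨n-1, by omega⟩
  rw [h1, h2, h3, h4, h5, h6]
  ring

lemma det_F1_odd (n : ℕ) (hn : n % 2 = 0) (h1n : 1 ≤ n) :
    (F1mat (n+1)).det = -(Dmat n).det + (Emat n).det := by
  have hcol : ∀ i : Fin (n+1), F1mat (n+1) i (Fin.last n) = Mfun (i : ℕ) (n+1) := by
    intro i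
    simp only [F1mat, Matrix.of_apply, Fin.val_last]
    rw [if_pos (by omega)]
  rw [Matrix.det_succ_column (F1mat (n+1)) (Fin.last n)]
  rw [Fintype.sum_eq_add (Fin.last n) (⟨n-1, by omega⟩ : Fin (n+1))
    (by intro h; have := congrArg Fin.val h; simp at this; omega)
    (fun i hi => by
      have hi1 : (i : ℕ) ≠ n := fun h => hi.1 (Fin.ext (by simp [h]))
      have hi2 : (i : ℕ) ≠ n - 1 := fun h => hi.2 (Fin.ext (by simp [h]))
      have hlt := i.isLt
      have hz : Mfun (i : ℕ) (n+1) = 0 := by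
        refine Mfun_zero (by omega) ?_
        unfold bedge; omega
      rw [hcol i, hz]
      ring)]
  have h1 : F1mat (n+1) (Fin.last n) (Fin.last n) = -1 := by
    rw [hcol]
    simp only [Fin.val_last]
    exact Mfun_edge (by omega) (by unfold bedge; omega)
  have h2 : (F1mat (n+1)).submatrix (Fin.last n).succAbove (Fin.last n).succAbove
      = Dmat n := by
    ext i j : 2
    simp only [Matrix.submatrix_apply, Fin.succAbove_last, F1mat, Dmat,
      Matrix.of_apply, Fin.coe_castSucc]
    rw [if_neg (show ¬((j : ℕ) = n + 1 - 1) from by omega)]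
  have h3 : F1mat (n+1) ⟨n-1, by omega⟩ (Fin.last n) = -1 := by
    rw [hcol]
    show Mfun (n-1) (n+1) = -1
    exact Mfun_edge (by omega) (by unfold bedge; omega)
  have h4 : (F1mat (n+1)).submatrix (⟨n-1, by omega⟩ : Fin (n+1)).succAbove
      (Fin.last n).succAbove = Emat n := by
    ext i j : 2
    simp only [Matrix.submatrix_apply, Fin.succAbove_last, F1mat, Emat,
      Matrix.of_apply, succAbove_coe, Fin.coe_castSucc]
    rw [if_neg (show ¬((j : ℕ) = n + 1 - 1) from by omega)]
  have h5 : ((-1 : Polynomial ℤ)) ^ ((Fin.last n : ℕ) + (Fin.last n : ℕ)) = 1 :=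
    Even.neg_one_pow ⟨n, by simp⟩
  have h6 : ((-1 : Polynomial ℤ)) ^ (((⟨n-1, by omega⟩ : Fin (n+1)) : ℕ) + (Fin.last n : ℕ)) = -1 := by
    refine Odd.neg_one_pow ?_
    show Odd (n - 1 + n)
    exact ⟨n-1, by omega⟩
  rw [h1, h2, h3, h4, h5, h6]
  ring

lemma det_E_even (n : ℕ) (hn : n % 2 = 1) :
    (Emat (n+1)).det = (F1mat n).det := by
  have h1n : 1 ≤ n := by omega
  have hrow : ∀ j : Fin (n+1), Emat (n+1) (Fin.last n) j = Mfun (n+1) (j : ℕ) := by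
    intro j
    simp only [Emat, Matrix.of_apply, Fin.val_last]
    rw [if_pos (by omega)]
  rw [Matrix.det_succ_row (Emat (n+1)) (Fin.last n)]
  rw [Fintype.sum_eq_single (⟨n-1, by omega⟩ : Fin (n+1))
    (fun j hj => by
      have hj1 : (j : ℕ) ≠ n - 1 := fun h => hj (Fin.ext (by simp [h]))
      have hlt := j.isLt
      have hz : Mfun (n+1) (j : ℕ) = 0 := by
        refine Mfun_zero (by omega) ?_
        unfold bedge; omega
      rw [hrow j, hz]
      ring)]
  have h1 : Emat (n+1) (Fin.last n) ⟨n-1, by omega⟩ = -1 := by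
    rw [hrow]
    show Mfun (n+1) (n-1) = -1
    exact Mfun_edge (by omega) (by unfold bedge; omega)
  have h2 : (Emat (n+1)).submatrix (Fin.last n).succAbove
      (⟨n-1, by omega⟩ : Fin (n+1)).succAbove = F1mat n := by
    ext i j : 2
    have hilt := i.isLt
    simp only [Matrix.submatrix_apply, Fin.succAbove_last, Emat, F1mat,
      Matrix.of_apply, succAbove_coe, Fin.coe_castSucc]
    rw [if_neg (show ¬((i : ℕ) = n + 1 - 1) from by omega)]
  have h6 : ((-1 : Polynomial ℤ)) ^ ((Fin.last n : ℕ) + ((⟨n-1, by omega⟩ : Fin (n+1)) : ℕ)) = -1 := by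
    refine Odd.neg_one_pow ?_
    show Odd (n + (n - 1))
    exact ⟨n-1, by omega⟩
  rw [h1, h2, h6]
  ring

/-- The claimed determinant polynomial. -/
noncomputable def Qpoly (m : ℕ) : Polynomial ℤ :=
  ∑ j ∈ range (m+1), (-1 : Polynomial ℤ)^j * (Nat.choose (m+1-j) j : Polynomial ℤ) * X^(2*m-2*j)

lemma Qrec (m : ℕ) : Qpoly (m+2) = X^2 * (Qpoly (m+1) - Qpoly m) := by
  have step1 : Qpoly (m+2) =
      ∑ j ∈ range (m+2), (-1 : Polynomial ℤ)^j * (Nat.choose (m+3-j) j : Polynomial ℤ) * X^(2*m+4-2*j) := by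
    unfold Qpoly
    rw [Finset.sum_range_succ]
    have hz : Nat.choose (m+2+1-(m+2)) (m+2) = 0 := by
      rw [show m+2+1-(m+2) = 1 from by omega]
      exact Nat.choose_eq_zero_of_lt (by omega)
    rw [hz]
    push_cast
    rw [mul_zero, zero_mul, add_zero]
    refine Finset.sum_congr rfl fun j hj => ?_
    rw [Finset.mem_range] at hj
    rw [show m+2+1-j = m+3-j from by omega, show 2*(m+2)-2*j = 2*m+4-2*j from by omega]
  have step2 : X^2 * Qpoly (m+1) =
      ∑ j ∈ range (m+2), (-1 : Polynomial ℤ)^j * (Nat.choose (m+2-j) j : Polynomial ℤ) * X^(2*m+4-2*j) := by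
    unfold Qpoly
    rw [Finset.mul_sum]
    refine Finset.sum_congr rfl fun j hj => ?_
    rw [Finset.mem_range] at hj
    rw [show m+1+1-j = m+2-j from by omega,
      show 2*m+4-2*j = 2*(m+1)-2*j+2 from by omega, pow_add]
    ring
  have step3 : X^2 * Qpoly m =
      ∑ j ∈ range (m+1), (-1 : Polynomial ℤ)^j * (Nat.choose (m+1-j) j : Polynomial ℤ) * X^(2*m+2-2*j) := by
    unfold Qpoly
    rw [Finset.mul_sum]
    refine Finset.sum_congr rfl fun j hj => ?_
    rw [Finset.mem_range] at hj
    rw [show 2*m+2-2*j = 2*m-2*j+2 from by omega, pow_add]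
    ring
  rw [step1, mul_sub, step2, step3]
  rw [Finset.sum_range_succ' (fun j => (-1 : Polynomial ℤ)^j * (Nat.choose (m+3-j) j : Polynomial ℤ) * X^(2*m+4-2*j)) (m+1)]
  rw [Finset.sum_range_succ' (fun j => (-1 : Polynomial ℤ)^j * (Nat.choose (m+2-j) j : Polynomial ℤ) * X^(2*m+4-2*j)) (m+1)]
  simp only [Nat.choose_zero_right, Nat.sub_zero, pow_zero, Nat.cast_one, one_mul]
  rw [add_sub_right_comm]
  congr 1
  rw [← Finset.sum_sub_distrib]
  refine Finset.sum_congr rfl fun j hj => ?_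
  rw [Finset.mem_range] at hj
  rw [show m+3-(j+1) = (m+1-j)+1 from by omega, show m+2-(j+1) = m+1-j from by omega,
    show 2*m+4-2*(j+1) = 2*m+2-2*j from by omega, Nat.choose_succ_succ]
  push_cast
  ring

lemma detD1 : (Dmat 1).det = X := by
  rw [Matrix.det_fin_one]
  show Mfun 0 0 = X
  exact Mfun_diag 0

lemma detF1_1 : (F1mat 1).det = -1 := by
  rw [Matrix.det_fin_one]
  show Mfun 0 (if (0:ℕ) = 1 - 1 then 1 else 0) = -1
  rw [if_pos rfl]
  exact Mfun_edge (by omega) (by unfold bedge; omega)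

lemma detD2 : (Dmat 2).det = X^2 - 1 := by
  have := det_D_even 1 (by norm_num)
  rw [show (1:ℕ)+1 = 2 from rfl] at this
  rw [this, detD1, detF1_1]; ring

lemma detE2 : (Emat 2).det = -1 := by
  have := det_E_even 1 (by norm_num)
  rw [show (1:ℕ)+1 = 2 from rfl] at this
  rw [this, detF1_1]

lemma detD3 : (Dmat 3).det = X^3 - X := by
  have := det_D_odd 2 (by norm_num)
  rw [show (2:ℕ)+1 = 3 from rfl] at this
  rw [this, detD2]; ring

lemma detF1_3 : (F1mat 3).det = -X^2 := by
  have := det_F1_odd 2 (by norm_num) (by norm_num)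
  rw [show (2:ℕ)+1 = 3 from rfl] at this
  rw [this, detD2, detE2]; ring

lemma detD4 : (Dmat 4).det = X^4 - 2*X^2 := by
  have := det_D_even 3 (by norm_num)
  rw [show (3:ℕ)+1 = 4 from rfl] at this
  rw [this, detD3, detF1_3]; ring

lemma detE4 : (Emat 4).det = -X^2 := by
  have := det_E_even 3 (by norm_num)
  rw [show (3:ℕ)+1 = 4 from rfl] at this
  rw [this, detF1_3]

lemma Qpoly2 : Qpoly 2 = X^4 - 2*X^2 := by
  unfold Qpoly
  rw [Finset.sum_range_succ, Finset.sum_range_succ, Finset.sum_range_succ,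
    Finset.sum_range_zero]
  norm_num [Nat.choose]
  ring

lemma Qpoly3 : Qpoly 3 = X^6 - 3*X^4 + X^2 := by
  unfold Qpoly
  rw [Finset.sum_range_succ, Finset.sum_range_succ, Finset.sum_range_succ,
    Finset.sum_range_succ, Finset.sum_range_zero]
  norm_num [Nat.choose]
  ring

lemma key (m : ℕ) (hm : 2 ≤ m) :
    (Dmat (2*m)).det = Qpoly m ∧
      (Emat (2*m)).det = Qpoly (m+1) - (X^2 - 1) * Qpoly m := by
  induction m with
  | zero => omega
  | succ k ih =>
    rcases Nat.lt_or_ge k 2 with hk | hk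
    · have hk1 : k = 1 := by omega
      subst hk1
      rw [show 2*(1+1) = 4 from rfl]
      refine ⟨by rw [detD4, Qpoly2], ?_⟩
      rw [detE4, Qpoly2, Qpoly3]
      ring
    · obtain ⟨hD, hE⟩ := ih hk
      have h1 : 2*(k+1) = (2*k+1)+1 := by ring
      have hDodd : (Dmat (2*k+1)).det = X * (Dmat (2*k)).det :=
        det_D_odd (2*k) (by omega)
      have hF1 : (F1mat (2*k+1)).det = -(Dmat (2*k)).det + (Emat (2*k)).det :=
        det_F1_odd (2*k) (by omega) (by omega)
      constructor
      · rw [h1, det_D_even (2*k+1) (by omega), hDodd, hF1, hD, hE]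
        ring
      · rw [h1, det_E_even (2*k+1) (by omega), hF1, hD, hE,
          show k+1+1 = k+2 from rfl, Qrec]
        ring

def Bmat (n : ℕ) : Matrix (Fin n) (Fin n) ℤ :=
  Matrix.of fun i j => if bedge (i : ℕ) (j : ℕ) then 1 else 0

lemma charmatrix_B (n : ℕ) : (Bmat n).charmatrix = Dmat n := by
  refine Matrix.ext fun i j => ?_
  rw [Matrix.charmatrix_apply]
  show Matrix.diagonal (fun _ => X) i j
      - Polynomial.C (if bedge (i : ℕ) (j : ℕ) then 1 else 0) = Mfun (i : ℕ) (j : ℕ)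
  rw [Matrix.diagonal_apply, apply_ite Polynomial.C, map_one, map_zero, Mfun]
  congr 1
  refine if_congr ?_ rfl rfl
  exact ⟨fun h => by rw [h], fun h => Fin.ext h⟩

def permE (n : ℕ) (hn : n % 2 = 0) : Fin n ≃ Fin n where
  toFun p := ⟨if (p : ℕ) % 2 = 0 then n/2 - (p : ℕ)/2 - 1 else n/2 + ((p : ℕ) - 1)/2, by
    have := p.isLt; split_ifs <;> omega⟩
  invFun i := ⟨if 2*(i : ℕ)+2 ≤ n then n - 2*(i : ℕ) - 2 else 2*(i : ℕ)+1 - n, by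
    have := i.isLt; split_ifs <;> omega⟩
  left_inv p := by
    have := p.isLt
    apply Fin.ext
    simp only [Fin.val_mk]
    split_ifs <;> omega
  right_inv i := by
    have := i.isLt
    apply Fin.ext
    simp only [Fin.val_mk]
    split_ifs <;> omega

lemma adjA_perm (n : ℕ) (hn : n % 2 = 0) :
    adjA n = (Matrix.reindex (permE n hn) (permE n hn)) (Bmat n) := by
  ext i j : 2
  have hi := i.isLt
  have hj := j.isLt
  rw [Matrix.reindex_apply, Matrix.submatrix_apply]
  have hsi : (((permE n hn).symm i : Fin n) : ℕ)
      = if 2*(i : ℕ)+2 ≤ n then n - 2*(i : ℕ) - 2 else 2*(i : ℕ)+1 - n := rfl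
  have hsj : (((permE n hn).symm j : Fin n) : ℕ)
      = if 2*(j : ℕ)+2 ≤ n then n - 2*(j : ℕ) - 2 else 2*(j : ℕ)+1 - n := rfl
  show (if (j : ℕ) = (i : ℕ) + 1 ∨ (i : ℕ) + (j : ℕ) + 2 = n + 1 then (1:ℤ) else 0)
      = if bedge (((permE n hn).symm i : Fin n) : ℕ) (((permE n hn).symm j : Fin n) : ℕ)
          then 1 else 0
  rw [hsi, hsj]
  refine if_congr ?_ rfl rfl
  unfold bedge
  split_ifs <;> omega

lemma RHS_eq (m : ℕ) (hm : 1 ≤ m) :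
    (∑ k ∈ Finset.Icc 1 ((m+1)/2 + 1),
      (-1 : Polynomial ℤ)^(k-1) * ((m + 2 - k).choose (k-1) : Polynomial ℤ)
        * X^(2*m + 2 - 2*k)) = Qpoly m := by
  rw [← Finset.Ico_add_one_right_eq_Icc, Finset.sum_Ico_eq_sum_range]
  rw [show (m+1)/2 + 1 + 1 - 1 = (m+1)/2 + 1 from by omega]
  have hstep : ∀ k ∈ range ((m+1)/2 + 1),
      (-1 : Polynomial ℤ)^(1+k-1) * ((m + 2 - (1+k)).choose (1+k-1) : Polynomial ℤ)
        * X^(2*m + 2 - 2*(1+k))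
      = (-1 : Polynomial ℤ)^k * ((m+1-k).choose k : Polynomial ℤ) * X^(2*m - 2*k) := by
    intro k hk
    rw [show 1+k-1 = k from by omega, show m+2-(1+k) = m+1-k from by omega,
      show 2*m+2-2*(1+k) = 2*m-2*k from by omega]
  rw [Finset.sum_congr rfl hstep]
  unfold Qpoly
  refine Finset.sum_subset ?_ ?_
  · intro k hk
    rw [Finset.mem_range] at *
    omega
  · intro k hk hk2
    rw [Finset.mem_range] at *
    rw [Nat.choose_eq_zero_of_lt (by omega)]
    push_cast
    ring


end Aux

/-- Lemma 2, even case: explicit form of the characteristic polynomial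
`det (λ I - A_n)` for even `n ≥ 4`. -/
theorem charpoly_adjA_even (n : ℕ) (hn : 4 ≤ n) (hev : Even n) :
    (adjA n).charpoly =
      ∑ k ∈ Finset.Icc 1 ((n + 2) / 4 + 1),
        (-1 : Polynomial ℤ) ^ (k - 1) *
          (Nat.choose (n / 2 + 2 - k) (k - 1) : Polynomial ℤ) *
            Polynomial.X ^ (n + 2 - 2 * k) := by
  obtain ⟨m, rfl⟩ := hev
  have hm : 2 ≤ m := by omega
  have hn2 : (m+m) % 2 = 0 := by omega
  rw [adjA_perm (m+m) hn2, Matrix.charpoly_reindex]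
  have hchar : (Bmat (m+m)).charpoly = (Dmat (m+m)).det := by
    unfold Matrix.charpoly
    rw [charmatrix_B]
  rw [hchar]
  rw [show m+m = 2*m from by ring]
  rw [(key m hm).1]
  rw [show (2*m+2)/4 = (m+1)/2 from by omega, show 2*m/2 = m from by omega]
  exact (RHS_eq m (by omega)).symm
end

section
/- (Intermediate identity in the proof of Lemma 4.2) Let Q_n(λ) = det(B_n − λI) and P_n(λ) = det(A_n − λI) (both in the convention det(M − λI)). Then for every n ≥ 7 the identity Q_n(λ) = (1 − λ) P_n(λ) + λ² P_{n−4}(λ) holds as an identity of polynomials. -/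
/-- `Qp n` is the polynomial `Q_n(λ) = det (B_n - λ I)`. -/
noncomputable def Qp (n : ℕ) : Polynomial ℤ :=
  ((adjB n).map Polynomial.C - Matrix.scalar (Fin (n + 1)) Polynomial.X).det


/-!
Expanding `det (B_n - λI)` along column 0, whose only nonzero entries are `1 - λ` in row 0 and
`1` in row `n`, gives `(1 - λ) P_n` plus `±` the minor at `(n, 0)`. That minor is
`pencilB n n = I + J - λL`, with `J` the antidiagonal `i + j = n` and `L` the lower shift. Its
first row is a unit vector, and after subtracting the first row from the last row of the
remaining matrix the last row has the single entry `-λ`. Two more expansions along columns with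
a single nonzero entry, `1` and then `-λ`, end at `det (A_{n-4} - λI)`; the signs combine to `+λ²`.
-/

open Polynomial Matrix

section

variable {R : Type*} [CommRing R] {m : ℕ}

theorem Matrix.det_succ_column_of_eq_zero (M : Matrix (Fin (m + 1)) (Fin (m + 1)) R)
    {p q : Fin (m + 1)} (h : ∀ i ≠ p, M i q = 0) :
    M.det = (-1) ^ ((p : ℕ) + q) * M p q * (M.submatrix p.succAbove q.succAbove).det := by
  rw [det_succ_column M q, Fintype.sum_eq_single p fun i hi => by rw [h i hi, mul_zero, zero_mul]]

theorem Matrix.det_succ_row_of_eq_zero (M : Matrix (Fin (m + 1)) (Fin (m + 1)) R)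
    {p q : Fin (m + 1)} (h : ∀ j ≠ q, M p j = 0) :
    M.det = (-1) ^ ((p : ℕ) + q) * M p q * (M.submatrix p.succAbove q.succAbove).det := by
  rw [det_succ_row M p, Fintype.sum_eq_single q fun j hj => by rw [h j hj, mul_zero, zero_mul]]

end

theorem map_C_sub_scalar_X_apply {ι : Type*} [Fintype ι] [DecidableEq ι] (A : Matrix ι ι ℤ)
    (i j : ι) : (A.map C - scalar ι (X : ℤ[X])) i j = C (A i j) - if i = j then X else 0 := by
  simp [diagonal_apply]

theorem adjA_map_C_sub_scalar_X_apply (N : ℕ) (i j : Fin N) :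
    ((adjA N).map C - scalar (Fin N) (X : ℤ[X])) i j =
      (if (j : ℕ) = i + 1 ∨ (i : ℕ) + j + 2 = N + 1 then 1 else 0) -
        if (i : ℕ) = j then X else 0 := by
  simp only [map_C_sub_scalar_X_apply, adjA, of_apply, apply_ite C, C_1, C_0, Fin.ext_iff]

theorem adjB_map_C_sub_scalar_X_apply (N : ℕ) (i j : Fin (N + 1)) :
    ((adjB N).map C - scalar (Fin (N + 1)) (X : ℤ[X])) i j =
      (if ((i : ℕ) = 0 ∧ (j : ℕ) = 0) ∨ ((i : ℕ) = N ∧ (j : ℕ) = 0) ∨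
        (j : ℕ) = i + 1 ∨ (i : ℕ) + j = N + 1 then 1 else 0) -
        if (i : ℕ) = j then X else 0 := by
  simp only [map_C_sub_scalar_X_apply, adjB, of_apply, apply_ite C, C_1, C_0, Fin.ext_iff]

noncomputable def pencilB (N c : ℕ) : Matrix (Fin N) (Fin N) ℤ[X] :=
  of fun i j =>
    (if (j : ℕ) = i ∨ (i : ℕ) + j = c then 1 else 0) - if (i : ℕ) = j + 1 then X else 0

noncomputable def pencilA (N : ℕ) : Matrix (Fin N) (Fin N) ℤ[X] :=
  of fun i j =>
    (if (j : ℕ) = i + 1 ∨ (i : ℕ) + j = N then 1 else 0) - if (i : ℕ) = j then X else 0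

theorem Qp_succ (n : ℕ) :
    Qp (n + 1) = (1 - X) * Pp (n + 1) + (-1) ^ (n + 1) * (pencilB (n + 1) (n + 1)).det := by
  set B := (adjB (n + 1)).map C - scalar (Fin (n + 1 + 1)) (X : ℤ[X])
  have hcol : ∀ i : Fin (n + 1), i ≠ Fin.last n → B i.succ 0 = 0 := by
    intro i hi
    simp only [B, adjB_map_C_sub_scalar_X_apply, Fin.val_succ, Fin.val_zero]
    grind
  have hP : (B.submatrix Fin.succ Fin.succ).det = Pp (n + 1) := by
    congr 1
    ext i j : 1
    simp only [B, submatrix_apply, adjA_map_C_sub_scalar_X_apply, adjB_map_C_sub_scalar_X_apply,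
      Fin.val_succ]
    grind
  have hM : B.submatrix (Fin.last n).succ.succAbove Fin.succ = pencilB (n + 1) (n + 1) := by
    ext i j : 1
    simp only [B, submatrix_apply, adjB_map_C_sub_scalar_X_apply, pencilB, of_apply, Fin.succ_last,
      Fin.succAbove_last, Fin.val_castSucc, Fin.val_succ]
    grind
  have h00 : B 0 0 = 1 - X := by simp [B, adjB]
  have hl0 : B (Fin.last n).succ 0 = 1 := by simp [B, adjB]
  rw [show Qp (n + 1) = B.det from rfl, det_succ_column_zero, Fin.sum_univ_succ,
    Fintype.sum_eq_single (Fin.last n) fun i hi => by rw [hcol i hi, mul_zero, zero_mul],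
    Fin.succAbove_zero, hP, hM, h00, hl0]
  simp

theorem det_pencilB_self (n : ℕ) : (pencilB (n + 2) (n + 2)).det = (pencilB (n + 1) n).det := by
  have hrow : ∀ j ≠ 0, pencilB (n + 2) (n + 2) 0 j = 0 := by
    intro j hj
    simp only [pencilB, of_apply, Fin.val_zero]
    grind
  have hminor : (pencilB (n + 2) (n + 2)).submatrix Fin.succ Fin.succ = pencilB (n + 1) n := by
    ext i j : 1
    simp only [pencilB, submatrix_apply, of_apply, Fin.val_succ]
    grind
  rw [det_succ_row_of_eq_zero _ hrow, Fin.succAbove_zero, hminor]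
  simp [pencilB]

theorem det_pencilB_succ (k : ℕ) :
    (pencilB (k + 3) (k + 2)).det = (-1) ^ (k + 1) * X * (pencilA (k + 1)).det := by
  set M := pencilB (k + 3) (k + 2)
  set q := (Fin.last (k + 1)).castSucc
  -- Subtracting row 0 from the last row leaves the single entry `-X` in it.
  set M' := M.updateRow (Fin.last (k + 2)) (M (Fin.last (k + 2)) + (-1 : ℤ[X]) • M 0)
  have hrow : ∀ j ≠ q, M' (Fin.last (k + 2)) j = 0 := by
    intro j hj
    simp only [M', M, updateRow_self, Pi.add_apply, Pi.smul_apply, smul_eq_mul, pencilB, of_apply,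
      Fin.val_last, Fin.val_zero]
    grind
  have hlast : M' (Fin.last (k + 2)) q = -X := by
    simp [M', M, q, pencilB]
  set M'' := M.submatrix Fin.castSucc q.succAbove
  have hcol : ∀ i ≠ 0, M'' i (Fin.last (k + 1)) = 0 := by
    intro i hi
    simp only [M'', M, q, submatrix_apply, Fin.succAbove_castSucc_self, pencilB, of_apply]
    grind
  have hminor : M''.submatrix Fin.succ Fin.castSucc = pencilA (k + 1) := by
    ext i j : 1
    simp only [M'', M, q, submatrix_apply,
      Fin.succAbove_castSucc_of_lt _ _ (Fin.castSucc_lt_last j), pencilB, pencilA, of_apply,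
      Fin.val_castSucc, Fin.val_succ]
    grind
  have h0 : M'' 0 (Fin.last (k + 1)) = 1 := by
    simp [M'', M, q, pencilB]
  rw [← det_updateRow_add_smul_self M (Fin.last_pos.ne' : Fin.last (k + 2) ≠ 0),
    det_succ_row_of_eq_zero _ hrow, hlast, submatrix_updateRow_succAbove,
    Fin.succAbove_last, det_succ_column_of_eq_zero _ hcol, h0, Fin.succAbove_zero,
    Fin.succAbove_last, hminor]
  have hsign : (-1 : ℤ[X]) ^ (k + 2 + (k + 1)) = -1 := Odd.neg_one_pow ⟨k + 1, by ring⟩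
  simp only [q, Fin.val_last, Fin.val_castSucc, Fin.val_zero, zero_add, hsign]
  ring

theorem det_pencilA_succ (k : ℕ) : (pencilA (k + 1)).det = -X * Pp k := by
  have hcol : ∀ i ≠ 0, pencilA (k + 1) i 0 = 0 := by
    intro i hi
    simp only [pencilA, of_apply, Fin.val_zero]
    grind
  have hminor : (pencilA (k + 1)).submatrix Fin.succ Fin.succ =
      (adjA k).map C - scalar (Fin k) X := by
    ext i j : 1
    simp only [pencilA, submatrix_apply, of_apply, adjA_map_C_sub_scalar_X_apply, Fin.val_succ]
    grind
  rw [det_succ_column_of_eq_zero _ hcol, Fin.succAbove_zero, hminor]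
  simp [pencilA, Pp]

theorem Qp_add_four (k : ℕ) : Qp (k + 4) = (1 - X) * Pp (k + 4) + X ^ 2 * Pp k := by
  have hsign : ((-1 : ℤ[X]) ^ (k + 4)) * (-1) ^ (k + 1) = -1 := by
    rw [← pow_add]; exact Odd.neg_one_pow ⟨k + 2, by ring⟩
  rw [Qp_succ, det_pencilB_self, det_pencilB_succ, det_pencilA_succ]
  linear_combination (-X ^ 2 * Pp k) * hsign

/-- Intermediate identity in the proof of Lemma 4.2:
`Q_n(λ) = (1 - λ) P_n(λ) + λ² P_{n-4}(λ)` for `n ≥ 7`. -/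
theorem Qp_eq_Pp_intermediate (n : ℕ) (hn : 7 ≤ n) :
    Qp n = (1 - Polynomial.X) * Pp n + Polynomial.X ^ 2 * Pp (n - 4) := by
  obtain ⟨k, rfl⟩ := Nat.exists_eq_add_of_le' (by omega : 4 ≤ n)
  simpa using Qp_add_four k
end

section
/- (Lemma 4.4, even case) For every even n = 2m with n ≥ 4, the characteristic polynomial of B_n has the explicit representation det(λI − B_n) = Σ_{k=1}^{⌊(n+3)/4⌋+2} (−1)^{k−1} · ( C(n/2 − k + 2, k−1) + C(n/2 − k + 2, k−2) · λ ) · λ^{n−2k+3}, where C(a,b) denotes the binomial coefficient (with C(a,b) = 0 for b < 0 or b > a) and any term with a negative exponent of λ has vanishing coefficient. -/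
/-!
Column `0` of `X - B_n` has nonzero entries only in rows `0` and `n`, so expanding along it gives
`χ(B_n) = (X - 1) a_n ± t_{n-1}`, where `a_n = χ(A_n)` and `t_{n-1}` is the minor of `X - A_n`
without its last row and first column. Both are determinants in the family `pathAntidiagMatrix`,
which is closed under deleting first/last rows and columns; expanding along rows or columns with
at most two nonzero entries yields the coupled recurrences
`a_{k+2} = X² a_k + (-1)^k t_{k+1}` and `t_{k+2} = t_k + (-1)^k a_{k+1}`.
On even indices Pascal's rule shows they are solved by the alternating binomial sums
`altBinomSum`, and `χ(B_{2m}) = X · altBinomSum 1 m - altBinomSum 0 m` is the stated sum after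
reindexing.
-/

open Polynomial Matrix Finset

namespace Matrix

variable {R : Type*} [CommRing R] {n : ℕ}

theorem det_succ_row_of_eq_single (A : Matrix (Fin (n + 1)) (Fin (n + 1)) R) (i j : Fin (n + 1))
    (h : ∀ k, k ≠ j → A i k = 0) :
    A.det = (-1) ^ (i + j : ℕ) * A i j * (A.submatrix i.succAbove j.succAbove).det := by
  rw [det_succ_row A i, Fintype.sum_eq_single j fun k hk => by rw [h k hk, mul_zero, zero_mul]]

theorem det_succ_column_of_eq_single (A : Matrix (Fin (n + 1)) (Fin (n + 1)) R) (i j : Fin (n + 1))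
    (h : ∀ k, k ≠ i → A k j = 0) :
    A.det = (-1) ^ (i + j : ℕ) * A i j * (A.submatrix i.succAbove j.succAbove).det := by
  rw [det_succ_column A j, Fintype.sum_eq_single i fun k hk => by rw [h k hk, mul_zero, zero_mul]]

theorem det_succ_row_of_eq_pair (A : Matrix (Fin (n + 1)) (Fin (n + 1)) R) (i j j' : Fin (n + 1))
    (hj : j ≠ j') (h : ∀ k, k ≠ j → k ≠ j' → A i k = 0) :
    A.det = (-1) ^ (i + j : ℕ) * A i j * (A.submatrix i.succAbove j.succAbove).det +
      (-1) ^ (i + j' : ℕ) * A i j' * (A.submatrix i.succAbove j'.succAbove).det := by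
  rw [det_succ_row A i, Fintype.sum_eq_add j j' hj fun k hk => by
    rw [h k hk.1 hk.2, mul_zero, zero_mul]]

theorem det_succ_column_of_eq_pair (A : Matrix (Fin (n + 1)) (Fin (n + 1)) R) (i i' j : Fin (n + 1))
    (hi : i ≠ i') (h : ∀ k, k ≠ i → k ≠ i' → A k j = 0) :
    A.det = (-1) ^ (i + j : ℕ) * A i j * (A.submatrix i.succAbove j.succAbove).det +
      (-1) ^ (i' + j : ℕ) * A i' j * (A.submatrix i'.succAbove j.succAbove).det := by
  rw [det_succ_column A j, Fintype.sum_eq_add i i' hi fun k hk => by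
    rw [h k hk.1 hk.2, mul_zero, zero_mul]]

end Matrix

noncomputable def altBinomSum (a m : ℕ) : ℤ[X] :=
  ∑ k ∈ range ((m + a) / 2 + 1), (-1) ^ k * ((m + a - k).choose k : ℤ[X]) * X ^ (2 * (m - k))

theorem sum_range_eq_altBinomSum {a m N : ℕ} (hN : (m + a) / 2 < N) :
    ∑ k ∈ range N, (-1) ^ k * ((m + a - k).choose k : ℤ[X]) * X ^ (2 * (m - k)) =
      altBinomSum a m :=
  eventually_constant_sum (fun k hk => by rw [Nat.choose_eq_zero_of_lt (by omega)]; simp) hN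

theorem altBinomSum_zero_succ (m : ℕ) : altBinomSum 0 (m + 1) = X ^ 2 * altBinomSum 1 m := by
  rw [altBinomSum, altBinomSum, mul_sum]
  refine sum_congr rfl fun k hk => ?_
  rw [mem_range] at hk
  rw [show 2 * (m + 1 - k) = 2 + 2 * (m - k) by omega, pow_add]
  ring

theorem altBinomSum_one_succ (m : ℕ) :
    altBinomSum 1 (m + 1) = altBinomSum 0 (m + 1) - altBinomSum 0 m := by
  suffices h : altBinomSum 1 (m + 1) - altBinomSum 0 (m + 1) = -altBinomSum 0 m by
    linear_combination h
  rw [← sum_range_eq_altBinomSum (a := 1) (m := m + 1) (N := m / 2 + 2) (by omega),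
    ← sum_range_eq_altBinomSum (a := 0) (m := m + 1) (N := m / 2 + 2) (by omega),
    ← sum_range_eq_altBinomSum (a := 0) (m := m) (N := m / 2 + 1) (by omega),
    ← sum_sub_distrib, sum_range_succ', ← sum_neg_distrib]
  simp only [Nat.choose_zero_right, sub_self, add_zero]
  refine sum_congr rfl fun k hk => ?_
  rw [mem_range] at hk
  rw [show m + 1 + 1 - (k + 1) = (m - k) + 1 by omega, Nat.choose_succ_succ',
    show m + 1 + 0 - (k + 1) = m - k by omega]
  push_cast
  ring

-- `pathAntidiagMatrix 0 1 z` is `charmatrix (adjA z)`; the other members are its minors.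
noncomputable def pathAntidiagMatrix (d s z : ℕ) : Matrix (Fin z) (Fin z) ℤ[X] :=
  of fun i j => (if (i : ℕ) = j + d then X else 0) -
    (if (j : ℕ) + d = i + 1 ∨ (i : ℕ) + j + s = z then 1 else 0)

namespace pathAntidiagMatrix

section

variable {d s z : ℕ}

theorem submatrix_succ_succ :
    (pathAntidiagMatrix d s (z + 1)).submatrix Fin.succ Fin.succ = pathAntidiagMatrix d (s + 1) z := by
  ext i j : 1
  simp only [pathAntidiagMatrix, submatrix_apply, of_apply, Fin.val_succ]
  split_ifs <;> first | rfl | omega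

theorem submatrix_castSucc_castSucc :
    (pathAntidiagMatrix d (s + 1) (z + 1)).submatrix Fin.castSucc Fin.castSucc =
      pathAntidiagMatrix d s z := by
  ext i j : 1
  simp only [pathAntidiagMatrix, submatrix_apply, of_apply, Fin.val_castSucc]
  split_ifs <;> first | rfl | omega

theorem submatrix_castSucc_succ :
    (pathAntidiagMatrix d s (z + 1)).submatrix Fin.castSucc Fin.succ =
      pathAntidiagMatrix (d + 1) s z := by
  ext i j : 1
  simp only [pathAntidiagMatrix, submatrix_apply, of_apply, Fin.val_castSucc, Fin.val_succ]
  split_ifs <;> first | rfl | omega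

theorem submatrix_succ_castSucc :
    (pathAntidiagMatrix (d + 1) s (z + 1)).submatrix Fin.succ Fin.castSucc =
      pathAntidiagMatrix d s z := by
  ext i j : 1
  simp only [pathAntidiagMatrix, submatrix_apply, of_apply, Fin.val_castSucc, Fin.val_succ]
  split_ifs <;> first | rfl | omega

variable {i j : Fin z}

theorem apply_eq_zero (h₁ : (i : ℕ) ≠ j + d) (h₂ : ¬((j : ℕ) + d = i + 1 ∨ (i : ℕ) + j + s = z)) :
    pathAntidiagMatrix d s z i j = 0 := by
  rw [pathAntidiagMatrix, of_apply, if_neg h₁, if_neg h₂, sub_zero]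

theorem apply_eq_neg_one (h₁ : (i : ℕ) ≠ j + d) (h₂ : (j : ℕ) + d = i + 1 ∨ (i : ℕ) + j + s = z) :
    pathAntidiagMatrix d s z i j = -1 := by
  rw [pathAntidiagMatrix, of_apply, if_neg h₁, if_pos h₂, zero_sub]

theorem apply_eq_X (h₁ : (i : ℕ) = j + d) (h₂ : ¬((j : ℕ) + d = i + 1 ∨ (i : ℕ) + j + s = z)) :
    pathAntidiagMatrix d s z i j = X := by
  rw [pathAntidiagMatrix, of_apply, if_pos h₁, if_neg h₂, sub_zero]

end

theorem det_one_zero_succ (z : ℕ) :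
    (pathAntidiagMatrix 1 0 (z + 1)).det = -(pathAntidiagMatrix 1 1 z).det := by
  rw [det_succ_row_of_eq_single _ 0 0 fun k hk => ?_, Fin.succAbove_zero, submatrix_succ_succ,
    apply_eq_neg_one (by simp) (by simp)]
  · simp
  · rw [Ne, Fin.ext_iff] at hk
    exact apply_eq_zero (by simp) (by simp only [Fin.val_zero] at hk ⊢; omega)

theorem det_one_two_succ (z : ℕ) :
    (pathAntidiagMatrix 1 2 (z + 1)).det = -(pathAntidiagMatrix 1 1 z).det := by
  rw [det_succ_column_of_eq_single _ (Fin.last z) (Fin.last z) fun k hk => ?_,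
    Fin.succAbove_last, submatrix_castSucc_castSucc, apply_eq_neg_one (by simp) (by simp),
    Fin.val_last, ← two_mul, pow_mul]
  · simp
  · rw [Ne, Fin.ext_iff] at hk
    exact apply_eq_zero (by simp only [Fin.val_last] at hk ⊢; omega)
      (by simp only [Fin.val_last] at hk ⊢; omega)

theorem det_zero_two_succ (z : ℕ) :
    (pathAntidiagMatrix 0 2 (z + 1)).det = X * (pathAntidiagMatrix 0 1 z).det := by
  rw [det_succ_row_of_eq_single _ (Fin.last z) (Fin.last z) fun k hk => ?_,
    Fin.succAbove_last, submatrix_castSucc_castSucc, apply_eq_X (by simp) (by simp; omega),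
    Fin.val_last, ← two_mul, pow_mul]
  · simp
  · rw [Ne, Fin.ext_iff] at hk
    exact apply_eq_zero (by simp only [Fin.val_last] at hk ⊢; omega)
      (by simp only [Fin.val_last] at hk ⊢; omega)

theorem det_one_one_add_two (k : ℕ) :
    (pathAntidiagMatrix 1 1 (k + 2)).det =
      (pathAntidiagMatrix 1 1 k).det + (-1) ^ k * (pathAntidiagMatrix 0 1 (k + 1)).det := by
  rw [det_succ_row_of_eq_pair _ 0 0 (Fin.last _) (Fin.ne_of_val_ne (by simp)) fun j h0 hl => ?_,
    Fin.succAbove_zero, Fin.succAbove_last, submatrix_succ_succ, submatrix_succ_castSucc,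
    det_one_two_succ, apply_eq_neg_one (by simp) (by simp), apply_eq_neg_one (by simp) (by simp)]
  · simp [pow_succ]
  · rw [Ne, Fin.ext_iff] at h0 hl
    exact apply_eq_zero (by simp) (by simp only [Fin.val_zero, Fin.val_last] at h0 hl ⊢; omega)

theorem det_zero_one_add_two (k : ℕ) :
    (pathAntidiagMatrix 0 1 (k + 2)).det =
      X ^ 2 * (pathAntidiagMatrix 0 1 k).det + (-1) ^ k * (pathAntidiagMatrix 1 1 (k + 1)).det := by
  rw [det_succ_column_of_eq_pair _ 0 (Fin.last _) 0 (Fin.ne_of_val_ne (by simp)) fun i h0 hl => ?_,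
    Fin.succAbove_zero, Fin.succAbove_last, submatrix_succ_succ, submatrix_castSucc_succ,
    det_zero_two_succ, apply_eq_X (by simp) (by simp), apply_eq_neg_one (by simp) (by simp)]
  · simp only [Fin.val_zero, Fin.val_last]
    ring
  · rw [Ne, Fin.ext_iff] at h0 hl
    exact apply_eq_zero (by simp only [Fin.val_zero] at h0 ⊢; omega)
      (by simp only [Fin.val_zero, Fin.val_last] at h0 hl ⊢; omega)

theorem det_eq_altBinomSum (m : ℕ) :
    (pathAntidiagMatrix 0 1 (2 * m)).det = altBinomSum 1 m ∧
      (pathAntidiagMatrix 1 1 (2 * m + 1)).det = -altBinomSum 0 m := by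
  induction m with
  | zero =>
    refine ⟨by simp [altBinomSum], ?_⟩
    rw [Nat.mul_zero, Nat.zero_add, det_unique, apply_eq_neg_one (by simp) (by simp)]
    simp [altBinomSum]
  | succ m ih =>
    have h_even : (pathAntidiagMatrix 0 1 (2 * (m + 1))).det = altBinomSum 1 (m + 1) := by
      rw [mul_add_one, det_zero_one_add_two, ih.1, ih.2, altBinomSum_one_succ,
        altBinomSum_zero_succ, (even_two_mul m).neg_one_pow]
      ring
    refine ⟨h_even, ?_⟩
    rw [show 2 * (m + 1) + 1 = 2 * m + 1 + 2 by ring, det_one_one_add_two, ih.2,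
      show 2 * m + 1 + 1 = 2 * (m + 1) by ring, h_even, altBinomSum_one_succ, pow_succ,
      (even_two_mul m).neg_one_pow]
    ring

end pathAntidiagMatrix

theorem charmatrix_adjB_apply (n : ℕ) (i j : Fin (n + 1)) :
    charmatrix (adjB n) i j = (if (i : ℕ) = j then X else 0) -
      (if ((i : ℕ) = 0 ∧ (j : ℕ) = 0) ∨ ((i : ℕ) = n ∧ (j : ℕ) = 0) ∨
        (j : ℕ) = i + 1 ∨ (i : ℕ) + j = n + 1 then 1 else 0) := by
  simp only [charmatrix_apply, diagonal_apply, adjB, of_apply, Fin.ext_iff, apply_ite C, C_1, C_0]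

theorem charmatrix_adjB_submatrix_succ_succ (n : ℕ) :
    (charmatrix (adjB n)).submatrix Fin.succ Fin.succ = pathAntidiagMatrix 0 1 n := by
  ext i j : 1
  simp only [submatrix_apply, charmatrix_adjB_apply, pathAntidiagMatrix, of_apply, Fin.val_succ,
    Nat.add_one_ne_zero, and_false, false_or]
  split_ifs <;> first | rfl | omega

theorem charmatrix_adjB_submatrix_castSucc_succ (n : ℕ) :
    (charmatrix (adjB n)).submatrix Fin.castSucc Fin.succ = pathAntidiagMatrix 1 0 n := by
  ext i j : 1
  simp only [submatrix_apply, charmatrix_adjB_apply, pathAntidiagMatrix, of_apply, Fin.val_succ,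
    Fin.val_castSucc, Nat.add_one_ne_zero, and_false, false_or]
  split_ifs <;> first | rfl | omega

theorem charpoly_adjB_succ (k : ℕ) :
    (adjB (k + 1)).charpoly = (X - 1) * (pathAntidiagMatrix 0 1 (k + 1)).det +
      (-1) ^ (k + 1) * (pathAntidiagMatrix 1 1 k).det := by
  rw [charpoly, det_succ_column_of_eq_pair _ 0 (Fin.last _) 0 (Fin.ne_of_val_ne (by simp))
      fun i h0 hl => ?_,
    Fin.succAbove_zero, Fin.succAbove_last, charmatrix_adjB_submatrix_succ_succ,
    charmatrix_adjB_submatrix_castSucc_succ, pathAntidiagMatrix.det_one_zero_succ,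
    charmatrix_adjB_apply, charmatrix_adjB_apply]
  · simp
  · rw [Ne, Fin.ext_iff] at h0 hl
    simp only [Fin.val_zero, Fin.val_last] at h0 hl
    rw [charmatrix_adjB_apply, Fin.val_zero, if_neg (by omega), if_neg (by omega), sub_zero]

theorem charpoly_adjB_two_mul (m : ℕ) (hm : 1 ≤ m) :
    (adjB (2 * m)).charpoly = X * altBinomSum 1 m - altBinomSum 0 m := by
  obtain ⟨m, rfl⟩ := Nat.exists_eq_add_of_le' hm
  rw [show 2 * (m + 1) = 2 * m + 1 + 1 by ring, charpoly_adjB_succ,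
    show 2 * m + 1 + 1 = 2 * (m + 1) by ring, (pathAntidiagMatrix.det_eq_altBinomSum _).1,
    (pathAntidiagMatrix.det_eq_altBinomSum _).2, altBinomSum_one_succ,
    (even_two_mul (m + 1)).neg_one_pow]
  ring

theorem sum_Icc_eq_X_mul_altBinomSum_sub (m K : ℕ) (hm : 1 ≤ m) (hK : m / 2 + 2 ≤ K) :
    ∑ k ∈ Icc 1 K, (-1 : ℤ[X]) ^ (k - 1) *
        (((m + 2 - k).choose (k - 1) : ℤ[X]) +
          (if 2 ≤ k then ((m + 2 - k).choose (k - 2) : ℤ[X]) else 0) * X) *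
        X ^ (2 * m + 3 - 2 * k) =
      X * altBinomSum 1 m - altBinomSum 0 m := by
  obtain ⟨L, rfl⟩ : ∃ L, K = L + 1 := ⟨K - 1, by omega⟩
  rw [← Ico_add_one_right_eq_Icc, sum_Ico_eq_sum_range, Nat.add_sub_cancel, sum_range_succ',
    ← sum_range_eq_altBinomSum (a := 1) (N := L + 1) (by omega),
    ← sum_range_eq_altBinomSum (a := 0) (N := L) (by omega), sum_range_succ',
    mul_add (X : ℤ[X]), mul_sum, add_sub_right_comm, ← sum_sub_distrib]
  congr 1
  · refine sum_congr rfl fun j _ => ?_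
    rw [show 1 + (j + 1) - 1 = j + 1 by omega, show m + 2 - (1 + (j + 1)) = m - j by omega,
      show 1 + (j + 1) - 2 = j by omega, if_pos (by omega), show m + 1 - (j + 1) = m - j by omega,
      add_zero]
    rcases lt_or_ge j m with hj | hj
    · rw [show 2 * m + 3 - 2 * (1 + (j + 1)) = 2 * (m - (j + 1)) + 1 by omega,
        show 2 * (m - j) = 2 * (m - (j + 1)) + 1 + 1 by omega]
      ring
    · simp [Nat.sub_eq_zero_of_le hj, Nat.choose_eq_zero_of_lt (show 0 < j by omega)]
  · rw [if_neg (by omega), show 2 * m + 3 - 2 * (1 + 0) = 2 * (m - 0) + 1 by omega]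
    simp only [Nat.add_zero, Nat.sub_self, Nat.choose_zero_right]
    ring

-- The guard `2 ≤ k` encodes the paper's `C(a, -1) = 0`: in `ℕ`, `1 - 2 = 0` and `C(a, 0) = 1`.
/-- Lemma 4.4, even case: explicit form of the characteristic polynomial
`det (λ I - B_n)` for even `n ≥ 4`.  The binomial coefficient `C(a, k-2)` is
zero for `k = 1` (a "negative" lower index), which is encoded by the guard
`2 ≤ k`. -/
theorem charpoly_adjB_even (n : ℕ) (hn : 4 ≤ n) (hev : Even n) :
    (adjB n).charpoly =
      ∑ k ∈ Finset.Icc 1 ((n + 3) / 4 + 2),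
        (-1 : Polynomial ℤ) ^ (k - 1) *
          ((Nat.choose (n / 2 + 2 - k) (k - 1) : Polynomial ℤ) +
            (if 2 ≤ k then
              (Nat.choose (n / 2 + 2 - k) (k - 2) : Polynomial ℤ) else 0) *
              Polynomial.X) *
            Polynomial.X ^ (n + 3 - 2 * k) := by
  obtain ⟨m, rfl⟩ : ∃ m, n = 2 * m := ⟨n / 2, by have := hev.two_dvd; omega⟩
  rw [Nat.mul_div_cancel_left m two_pos, charpoly_adjB_two_mul m (by omega),
    sum_Icc_eq_X_mul_altBinomSum_sub m _ (by omega) (by omega)]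
end

section
/- For n = 4, the number f_4(k) of meaningful k-th order compositions of the differential operations on ℝ⁴ satisfies the recurrence f_4(k) = 2 f_4(k−2) for all k ≥ 3. -/
/-!
Prepending two vertices to a walk of length `k + 1` starting at `u` amounts to choosing a
walk `v → w → u` of length two. In the composability digraph on `ℝ⁴` every vertex is the
endpoint of exactly two such walks, so each walk of length `k + 1` extends to exactly two
walks of length `k + 3`.
-/

open Finset

namespace Matrix

variable {ι : Type*} (A : Matrix ι ι ℤ)

def IsWalk {k : ℕ} (s : Fin k → ι) : Prop :=
  ∀ i j : Fin k, (j : ℕ) = (i : ℕ) + 1 → A (s i) (s j) = 1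

instance {k : ℕ} : DecidablePred (A.IsWalk (k := k)) := by
  unfold IsWalk
  infer_instance

def walks [Fintype ι] (k : ℕ) : Finset (Fin k → ι) := {s | A.IsWalk s}

variable {A}

theorem isWalk_iff_forall_castSucc {k : ℕ} {s : Fin (k + 1) → ι} :
    A.IsWalk s ↔ ∀ i : Fin k, A (s i.castSucc) (s i.succ) = 1 := by
  refine ⟨fun h i => h _ _ rfl, fun h i j hij => ?_⟩
  obtain ⟨i', rfl⟩ : ∃ i' : Fin k, i'.castSucc = i := ⟨⟨i, by omega⟩, rfl⟩
  obtain rfl : j = i'.succ := Fin.ext hij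
  exact h i'

theorem isWalk_cons {k : ℕ} {v : ι} {s : Fin (k + 1) → ι} :
    A.IsWalk (Fin.cons v s : Fin (k + 2) → ι) ↔ A v (s 0) = 1 ∧ A.IsWalk s := by
  simp only [isWalk_iff_forall_castSucc, Fin.forall_fin_succ, Fin.castSucc_zero, Fin.cons_zero,
    Fin.cons_succ, ← Fin.succ_castSucc]

theorem isWalk_iff_tail {k : ℕ} {t : Fin (k + 2) → ι} :
    A.IsWalk t ↔ A (t 0) (t 1) = 1 ∧ A.IsWalk (Fin.tail t) := by
  conv_lhs => rw [← Fin.cons_self_tail t]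
  exact isWalk_cons

variable [Fintype ι]

theorem sum_walks_succ_succ {M : Type*} [AddCommMonoid M] (g : ι → M) (k : ℕ) :
    ∑ t ∈ A.walks (k + 2), g (t 0) =
      ∑ s ∈ A.walks (k + 1), ∑ v with A v (s 0) = 1, g v := by
  rw [sum_sigma']
  refine sum_nbij' (fun t => ⟨Fin.tail t, t 0⟩) (fun x => Fin.cons x.2 x.1) ?_ ?_ ?_ ?_ ?_
  · intro t ht
    rw [walks, mem_filter, isWalk_iff_tail] at ht
    exact mem_sigma.2
      ⟨mem_filter.2 ⟨mem_univ _, ht.2.2⟩, mem_filter.2 ⟨mem_univ _, ht.2.1⟩⟩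
  · rintro ⟨s, v⟩ h
    simp_all [walks, isWalk_iff_tail]
  · intro t _
    exact Fin.cons_self_tail t
  · rintro ⟨s, v⟩ _
    simp
  · simp

theorem card_adj_adj_eq_sum (u : ι) :
    #{p : ι × ι | A p.1 p.2 = 1 ∧ A p.2 u = 1} = ∑ w with A w u = 1, #{v | A v w = 1} := by
  rw [card_filter, Fintype.sum_prod_type, sum_comm, sum_filter]
  simp only [ite_and, card_filter]
  refine sum_congr rfl fun w _ => ?_
  split_ifs <;> simp

theorem card_walks_add_three (k : ℕ) {c : ℕ}
    (hc : ∀ u, #{p : ι × ι | A p.1 p.2 = 1 ∧ A p.2 u = 1} = c) :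
    #(A.walks (k + 3)) = c * #(A.walks (k + 1)) := by
  have card_walks_succ_succ (m : ℕ) :
      #(A.walks (m + 2)) = ∑ s ∈ A.walks (m + 1), #{v | A v (s 0) = 1} := by
    simpa only [sum_const, smul_eq_mul, mul_one] using
      A.sum_walks_succ_succ (M := ℕ) (fun _ => 1) m
  calc #(A.walks (k + 3))
      = ∑ s ∈ A.walks (k + 1), ∑ w with A w (s 0) = 1, #{v | A v w = 1} := by
        rw [card_walks_succ_succ, sum_walks_succ_succ (fun w => #{v | A v w = 1})]
    _ = c * #(A.walks (k + 1)) := by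
        simp only [← card_adj_adj_eq_sum, hc, sum_const, smul_eq_mul, mul_comm]

end Matrix

/-- For `n = 4`: `f_4(k) = 2 f_4(k-2)` for all `k ≥ 3`. -/
theorem fCount_four_recurrence (k : ℕ) (hk : 3 ≤ k) :
    fCount 4 k = 2 * fCount 4 (k - 2) := by
  obtain ⟨m, rfl⟩ : ∃ m, k = m + 3 := ⟨k - 3, by omega⟩
  exact Matrix.card_walks_add_three m (by decide)
end

section
/- For n = 4, the number g_4(k) of meaningful k-th order compositions of the differential operations together with the Gateaux directional derivative on ℝ⁴ satisfies the recurrence g_4(k) = g_4(k−1) + 2 g_4(k−2) − g_4(k−3) for all k ≥ 4. -/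
open Matrix Finset

def Valid (k : ℕ) (s : Fin (k + 1) → Fin 5) : Prop :=
  ∀ i : Fin k, adjB 4 (s i.castSucc) (s i.succ) = 1

instance (k : ℕ) (s : Fin (k + 1) → Fin 5) : Decidable (Valid k s) := by
  unfold Valid; infer_instance

def consE (k : ℕ) : (Fin 5 × (Fin (k + 1) → Fin 5)) ≃ (Fin (k + 2) → Fin 5) :=
  { toFun := fun p => Fin.cons p.1 p.2
    invFun := fun s => (s 0, Fin.tail s)
    left_inv := fun p => by simp
    right_inv := fun s => by simp [Fin.cons_self_tail] }

def cnt (k : ℕ) (v : Fin 5) : ℕ :=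
  (Finset.univ.filter fun s : Fin (k + 1) → Fin 5 => Valid k s ∧ s 0 = v).card

lemma valid_cons (k : ℕ) (w : Fin 5) (t : Fin (k + 1) → Fin 5) :
    Valid (k + 1) (Fin.cons w t) ↔ adjB 4 w (t 0) = 1 ∧ Valid k t := by
  constructor
  · intro h
    refine ⟨?_, fun i => ?_⟩
    · have := h 0
      simpa using this
    · have := h i.succ
      rw [← Fin.succ_castSucc] at this
      simpa using this
  · rintro ⟨h0, h⟩ i
    refine Fin.cases ?_ (fun i => ?_) i
    · simpa using h0
    · have := h i
      rw [← Fin.succ_castSucc]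
      simpa using this

lemma cnt_succ (k : ℕ) (v : Fin 5) :
    (cnt (k + 1) v : ℤ) = ∑ w : Fin 5, adjB 4 v w * cnt k w := by
  classical
  have h1 : (cnt (k + 1) v : ℤ) =
      ∑ s : Fin (k + 2) → Fin 5, if Valid (k + 1) s ∧ s 0 = v then 1 else 0 := by
    rw [cnt, card_filter]; push_cast; simp
  rw [h1, ← Fintype.sum_equiv (consE k) (fun p : Fin 5 × (Fin (k+1) → Fin 5) =>
      if Valid (k + 1) (Fin.cons p.1 p.2) ∧ (Fin.cons p.1 p.2 : Fin (k+2) → Fin 5) 0 = v then (1:ℤ) else 0)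
      (fun s => if Valid (k + 1) s ∧ s 0 = v then (1:ℤ) else 0)
      (fun p => by rfl)]
  rw [Fintype.sum_prod_type]
  have h2 : ∀ w : Fin 5, (∑ t : Fin (k + 1) → Fin 5,
      if Valid (k + 1) (Fin.cons w t) ∧ (Fin.cons w t : Fin (k+2) → Fin 5) 0 = v then (1:ℤ) else 0)
      = if w = v then ∑ t : Fin (k + 1) → Fin 5,
          (if adjB 4 v (t 0) = 1 then (1:ℤ) else 0) * (if Valid k t then 1 else 0) else 0 := by
    intro w
    by_cases hw : w = v
    · subst hw
      simp only [if_pos rfl]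
      refine Finset.sum_congr rfl fun t _ => ?_
      by_cases ha : adjB 4 w (t 0) = 1 <;> by_cases hv : Valid k t <;>
        simp [valid_cons, ha, hv]
    · simp only [if_neg hw]
      refine Finset.sum_eq_zero fun t _ => ?_
      simp [Fin.cons_zero, hw]
  rw [Finset.sum_congr rfl fun w _ => h2 w, Finset.sum_ite_eq' Finset.univ v, if_pos (mem_univ v)]
  -- now: ∑ t, [adj v (t 0) = 1] * [Valid k t] = ∑ w, adjB 4 v w * cnt k w
  have h3 : ∀ t : Fin (k + 1) → Fin 5,
      (if adjB 4 v (t 0) = 1 then (1:ℤ) else 0) * (if Valid k t then 1 else 0)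
      = ∑ w : Fin 5, if t 0 = w then (if adjB 4 v w = 1 then (1:ℤ) else 0) * (if Valid k t then 1 else 0) else 0 := by
    intro t
    rw [Finset.sum_ite_eq Finset.univ (t 0), if_pos (mem_univ _)]
  rw [Finset.sum_congr rfl fun t _ => h3 t, Finset.sum_comm]
  refine Finset.sum_congr rfl fun w _ => ?_
  have hadj : (if adjB 4 v w = 1 then (1:ℤ) else 0) = adjB 4 v w := by
    unfold adjB; simp only [Matrix.of_apply]; split <;> simp
  have hcnt : (cnt k w : ℤ) = ∑ t : Fin (k + 1) → Fin 5, if Valid k t ∧ t 0 = w then 1 else 0 := by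
    rw [cnt, card_filter]; push_cast; simp
  rw [hcnt, Finset.mul_sum]
  refine Finset.sum_congr rfl fun t _ => ?_
  rw [hadj]
  by_cases h0 : t 0 = w <;> by_cases hV : Valid k t <;> simp [h0, hV]

lemma cnt_eq (k : ℕ) (v : Fin 5) :
    (cnt k v : ℤ) = ((adjB 4 ^ k) *ᵥ (fun _ => 1)) v := by
  induction k generalizing v with
  | zero =>
    have : cnt 0 v = 1 := by
      rw [cnt]
      rw [Finset.card_eq_one]
      refine ⟨fun _ => v, ?_⟩
      ext s
      simp only [mem_filter, mem_univ, true_and, Finset.mem_singleton]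
      constructor
      · rintro ⟨-, h⟩
        funext i
        fin_cases i; exact h
      · rintro rfl
        exact ⟨fun i => i.elim0, rfl⟩
    rw [this]
    simp [Matrix.mulVec, Matrix.one_apply, dotProduct]
  | succ k ih =>
    rw [cnt_succ]
    have : adjB 4 ^ (k + 1) = adjB 4 * adjB 4 ^ k := by
      rw [pow_succ']
    rw [this, ← Matrix.mulVec_mulVec, Matrix.mulVec]
    simp only [dotProduct]
    exact Finset.sum_congr rfl fun w _ => by rw [ih w]

lemma gCount_eq (k : ℕ) :
    (gCount 4 (k + 1) : ℤ) = ∑ v : Fin 5, ((adjB 4 ^ k) *ᵥ (fun _ => 1)) v := by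
  have hfil : (Finset.univ.filter fun s : Fin (k + 1) → Fin 5 =>
      ∀ i j : Fin (k + 1), (j : ℕ) = (i : ℕ) + 1 → adjB 4 (s i) (s j) = 1)
      = Finset.univ.filter fun s => Valid k s := by
    refine Finset.filter_congr fun s _ => ?_
    constructor
    · intro h i
      exact h i.castSucc i.succ (by simp)
    · intro h i j hij
      have hi : (i : ℕ) < k := by
        have := j.isLt; omega
      have : i = (⟨i, hi⟩ : Fin k).castSucc := by
        apply Fin.ext; simp
      rw [this]
      have hj : j = (⟨i, hi⟩ : Fin k).succ := by
        apply Fin.ext; simp [hij]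
      rw [hj]
      exact h ⟨i, hi⟩
  have : gCount 4 (k + 1) = ∑ v : Fin 5, cnt k v := by
    rw [gCount, hfil]
    rw [Finset.card_eq_sum_card_fiberwise (f := fun s => s 0) (t := Finset.univ)
      (fun s _ => mem_univ _)]
    refine Finset.sum_congr rfl fun v _ => ?_
    rw [cnt, Finset.filter_filter]
  rw [this]
  push_cast
  exact Finset.sum_congr rfl fun v _ => cnt_eq k v

lemma keyMat : (adjB 4 ^ 3) *ᵥ (fun _ => (1:ℤ)) =
    (adjB 4 ^ 2) *ᵥ (fun _ => 1) + (2:ℤ) • ((adjB 4) *ᵥ fun _ => 1) - (fun _ => 1) := by decide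

/-- For `n = 4`: `g_4(k) = g_4(k-1) + 2 g_4(k-2) - g_4(k-3)` for all `k ≥ 4`. -/
theorem gCount_four_recurrence (k : ℕ) (hk : 4 ≤ k) :
    (gCount 4 k : ℤ) =
      (gCount 4 (k - 1) : ℤ) + 2 * (gCount 4 (k - 2) : ℤ) - (gCount 4 (k - 3) : ℤ) := by
  obtain ⟨m, rfl⟩ : ∃ m, k = m + 4 := ⟨k - 4, by omega⟩
  have e1 : m + 4 - 1 = (m + 2) + 1 := by omega
  have e2 : m + 4 - 2 = (m + 1) + 1 := by omega
  have e3 : m + 4 - 3 = m + 1 := by omega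
  have e0 : m + 4 = (m + 3) + 1 := by omega
  rw [e0, e1, e2, e3, gCount_eq, gCount_eq, gCount_eq, gCount_eq]
  have h3 : adjB 4 ^ (m + 3) = adjB 4 ^ m * adjB 4 ^ 3 := by rw [← pow_add]
  have h2 : adjB 4 ^ (m + 2) = adjB 4 ^ m * adjB 4 ^ 2 := by rw [← pow_add]
  have h1 : adjB 4 ^ (m + 1) = adjB 4 ^ m * adjB 4 ^ 1 := by rw [← pow_add]
  rw [h3, h2, h1, ← Matrix.mulVec_mulVec, ← Matrix.mulVec_mulVec, ← Matrix.mulVec_mulVec,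
    pow_one, keyMat]
  simp only [Matrix.mulVec_add, Matrix.mulVec_sub, Matrix.mulVec_smul]
  simp only [Pi.add_apply, Pi.sub_apply, Pi.smul_apply, smul_eq_mul]
  rw [Finset.sum_sub_distrib, Finset.sum_add_distrib, ← Finset.mul_sum]
end

section
/- For n = 5, the number g_5(k) of meaningful k-th order compositions of the differential operations together with the Gateaux directional derivative on ℝ⁵ satisfies the recurrence g_5(k) = 2 g_5(k−1) + g_5(k−2) − 2 g_5(k−3) for all k ≥ 4. -/
-- each vertex has out-degree 2
example (u : Fin 6) :
    (Finset.univ.filter fun v : Fin 6 => adjB 5 u v = 1).card = 2 := by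
  fin_cases u <;> decide

-- nice form equivalence
lemma nice (m : ℕ) (s : Fin (m + 1) → Fin 6) :
    (∀ i j : Fin (m+1), (j : ℕ) = (i : ℕ) + 1 → adjB 5 (s i) (s j) = 1) ↔
      ∀ i : Fin m, adjB 5 (s i.castSucc) (s i.succ) = 1 := by
  constructor
  · intro h i
    exact h i.castSucc i.succ (by simp)
  · intro h i j hij
    have hi : (i : ℕ) < m := by omega
    have : i = (⟨i, hi⟩ : Fin m).castSucc := by ext; simp
    have hj : j = (⟨i, hi⟩ : Fin m).succ := by ext; simp [hij]
    rw [this, hj]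
    exact h _

lemma snoc_char (m : ℕ) (t : Fin (m + 1) → Fin 6) (v : Fin 6) :
    (∀ i : Fin (m + 1), adjB 5 ((Fin.snoc t v : Fin (m+2) → Fin 6) i.castSucc) ((Fin.snoc t v : Fin (m+2) → Fin 6) i.succ) = 1) ↔
      (∀ i : Fin m, adjB 5 (t i.castSucc) (t i.succ) = 1) ∧ adjB 5 (t (Fin.last m)) v = 1 := by
  constructor
  · intro h
    refine ⟨fun i => ?_, ?_⟩
    · have := h i.castSucc
      rwa [Fin.succ_castSucc, Fin.snoc_castSucc, Fin.snoc_castSucc] at this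
    · have := h (Fin.last m)
      rwa [Fin.succ_last, Fin.snoc_last, Fin.snoc_castSucc] at this
  · rintro ⟨h1, h2⟩ i
    refine Fin.lastCases ?_ ?_ i
    · rw [Fin.succ_last, Fin.snoc_last, Fin.snoc_castSucc]; exact h2
    · intro j
      rw [Fin.succ_castSucc, Fin.snoc_castSucc, Fin.snoc_castSucc]; exact h1 j

def niceSet (m : ℕ) : Finset (Fin (m + 1) → Fin 6) :=
  Finset.univ.filter fun s => ∀ i : Fin m, adjB 5 (s i.castSucc) (s i.succ) = 1

lemma gCount_nice (m : ℕ) : gCount 5 (m + 1) = (niceSet m).card := by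
  unfold gCount niceSet
  congr 1
  apply Finset.filter_congr
  intro s _
  simpa using nice m s

lemma outdeg (u : Fin 6) :
    (Finset.univ.filter fun v : Fin 6 => adjB 5 u v = 1).card = 2 := by
  fin_cases u <;> decide

lemma doubling (m : ℕ) : gCount 5 (m + 2) = 2 * gCount 5 (m + 1) := by
  rw [show m + 2 = (m + 1) + 1 from rfl, gCount_nice, gCount_nice]
  have hmap : ∀ s ∈ niceSet (m + 1), Fin.init s ∈ niceSet m := by
    intro s hs
    simp only [niceSet, Finset.mem_filter, Finset.mem_univ, true_and] at hs ⊢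
    intro i
    have h := hs i.castSucc
    rwa [Fin.succ_castSucc] at h
  rw [Finset.card_eq_sum_card_fiberwise hmap]
  have hfib : ∀ t ∈ niceSet m,
      ((niceSet (m + 1)).filter fun s => Fin.init s = t).card = 2 := by
    intro t ht
    simp only [niceSet, Finset.mem_filter, Finset.mem_univ, true_and] at ht
    rw [← outdeg (t (Fin.last m))]
    refine Finset.card_bij' (fun s _ => s (Fin.last (m + 1)))
      (fun v _ => Fin.snoc t v) ?hi ?hj ?li ?ri
    case hi =>
      intro s hs
      simp only [Finset.mem_filter, Finset.mem_univ, true_and, niceSet] at hs ⊢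
      have hp := hs.1
      have hsnoc : s = Fin.snoc (Fin.init s) (s (Fin.last (m + 1))) := (Fin.snoc_init_self s).symm
      rw [hs.2] at hsnoc
      rw [hsnoc] at hp
      exact ((snoc_char m t _).1 hp).2
    case hj =>
      intro v hv
      simp only [Finset.mem_filter, Finset.mem_univ, true_and, niceSet] at hv ⊢
      exact ⟨(snoc_char m t v).2 ⟨ht, hv⟩, by simp⟩
    case li =>
      intro s hs
      simp only [Finset.mem_filter, niceSet] at hs
      have h2 := hs.2
      subst h2
      exact Fin.snoc_init_self s
    case ri =>
      intro v _
      simp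
  rw [Finset.sum_congr rfl hfib, Finset.sum_const, smul_eq_mul, mul_comm]

/-- For `n = 5`: `g_5(k) = 2 g_5(k-1) + g_5(k-2) - 2 g_5(k-3)` for all `k ≥ 4`. -/
theorem gCount_five_recurrence (k : ℕ) (hk : 4 ≤ k) :
    (gCount 5 k : ℤ) =
      2 * (gCount 5 (k - 1) : ℤ) + (gCount 5 (k - 2) : ℤ) - 2 * (gCount 5 (k - 3) : ℤ) := by
  obtain ⟨m, rfl⟩ : ∃ m, k = m + 4 := ⟨k - 4, by omega⟩
  have e1 : m + 4 - 1 = m + 3 := by omega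
  have e2 : m + 4 - 2 = m + 2 := by omega
  have e3 : m + 4 - 3 = m + 1 := by omega
  rw [e1, e2, e3, show m + 4 = (m + 2) + 2 from rfl, doubling (m + 2), doubling m]
  push_cast
  ring
end
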